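/- arXiv:2509.06869 — 2 statements merged into one kernel-verified Lean document; each statement's English description precedes it below -/
import Mathlib

section
/- The partial matching pseudo-distances are monotone increasing in r and converge pointwise to the full ℓ²-matching extended distance: d_Υ^(r) ≤ d_Υ^(s) ≤ d_Υ for 0 < r ≤ s, and for all γ,η ∈ Υ(ℝⁿ), d_Υ^(r)(γ,η) ↑ d_Υ(γ,η) as r ↑ ∞. -/
open MeasureTheory ENNReal Metric Set

noncomputable section

/-- Euclidean space `ℝⁿ`. -/
abbrev EucSp (n : ℕ) := EuclideanSpace ℝ (Fin n)

/-- The set of couplings of two measures. -/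
def Cpl {X : Type*} [MeasurableSpace X] (γ η : Measure X) : Set (Measure (X × X)) :=
  {q | q.map Prod.fst = γ ∧ q.map Prod.snd = η}

/-- The ℓ²-matching extended distance between two (configuration) measures:
the infimum over couplings of the squared-distance transport cost, with `inf ∅ = ∞`. -/
noncomputable def matchDist {X : Type*} [MeasurableSpace X] [PseudoEMetricSpace X]
    (γ η : Measure X) : ℝ≥0∞ :=
  (⨅ q ∈ Cpl γ η, ∫⁻ p, edist p.1 p.2 ^ 2 ∂q) ^ (1 / 2 : ℝ)

/-- The partial ℓ²-matching function subjected to `B_r`: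
`d_Υ^(r)(γ,η) = inf over boundary configurations α, β of
d_{Υ(B̄_r)}(γ|_{B_r} + α, η|_{B_r} + β)`. -/
noncomputable def dPartial (n : ℕ) (r : ℝ) (γ η : Measure (EucSp n)) : ℝ≥0∞ :=
  ⨅ (α : Measure (EucSp n)) (_ : α (sphere (0 : EucSp n) r)ᶜ = 0)
    (β : Measure (EucSp n)) (_ : β (sphere (0 : EucSp n) r)ᶜ = 0),
    matchDist (γ.restrict (ball (0 : EucSp n) r) + α)
      (η.restrict (ball (0 : EucSp n) r) + β)

/-- A configuration: a countable sum of Dirac measures. -/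
def IsConfiguration {X : Type*} [MeasurableSpace X] (γ : Measure X) : Prop :=
  ∃ (ι : Type) (_ : Countable ι) (f : ι → X),
    γ = Measure.sum fun i => Measure.dirac (f i)


open Filter Topology

namespace StatementTwo

/-! ### Generalities on `ℝ≥0∞`-powers -/

lemma half_sq (x : ℝ≥0∞) : (x ^ (1/2:ℝ)) ^ (2:ℝ) = x := by
  rw [← ENNReal.rpow_mul]; norm_num

lemma sq_half (x : ℝ≥0∞) : (x ^ (2:ℝ)) ^ (1/2:ℝ) = x := by
  rw [← ENNReal.rpow_mul]; norm_num

lemma rpow_half_iInf {ι : Sort*} (f : ι → ℝ≥0∞) :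
    (⨅ i, (f i) ^ (1/2:ℝ)) = (⨅ i, f i) ^ (1/2:ℝ) := by
  refine le_antisymm ?_ (le_iInf fun i => ENNReal.rpow_le_rpow (iInf_le f i) (by norm_num))
  have h : (⨅ i, (f i) ^ (1/2:ℝ)) ^ (2:ℝ) ≤ ⨅ i, f i := by
    refine le_iInf fun i => ?_
    calc (⨅ i, (f i) ^ (1/2:ℝ)) ^ (2:ℝ) ≤ ((f i) ^ (1/2:ℝ)) ^ (2:ℝ) :=
          ENNReal.rpow_le_rpow (iInf_le _ i) (by norm_num)
      _ = f i := half_sq _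
  calc (⨅ i, (f i) ^ (1/2:ℝ))
      = ((⨅ i, (f i) ^ (1/2:ℝ)) ^ (2:ℝ)) ^ (1/2:ℝ) := (sq_half _).symm
    _ ≤ (⨅ i, f i) ^ (1/2:ℝ) := ENNReal.rpow_le_rpow h (by norm_num)

lemma rpow_half_iSup {ι : Sort*} (f : ι → ℝ≥0∞) :
    (⨆ i, (f i) ^ (1/2:ℝ)) = (⨆ i, f i) ^ (1/2:ℝ) := by
  refine le_antisymm (iSup_le fun i => ENNReal.rpow_le_rpow (le_iSup f i) (by norm_num)) ?_
  have h : (⨆ i, f i) ≤ (⨆ i, (f i) ^ (1/2:ℝ)) ^ (2:ℝ) := by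
    refine iSup_le fun i => ?_
    calc f i = ((f i) ^ (1/2:ℝ)) ^ (2:ℝ) := (half_sq _).symm
      _ ≤ (⨆ i, (f i) ^ (1/2:ℝ)) ^ (2:ℝ) :=
          ENNReal.rpow_le_rpow (le_iSup (fun i => (f i) ^ (1/2:ℝ)) i) (by norm_num)
  calc (⨆ i, f i) ^ (1/2:ℝ) ≤ (((⨆ i, (f i) ^ (1/2:ℝ)) ^ (2:ℝ))) ^ (1/2:ℝ) :=
        ENNReal.rpow_le_rpow h (by norm_num)
    _ = _ := sq_half _

/-! ### The squared matching distance -/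

/-- transport cost -/
def cost {Y : Type*} [MeasurableSpace Y] [PseudoEMetricSpace Y] (q : Measure (Y × Y)) : ℝ≥0∞ :=
  ∫⁻ p, edist p.1 p.2 ^ 2 ∂q

/-- squared matching distance -/
def DD {Y : Type*} [MeasurableSpace Y] [PseudoEMetricSpace Y] (γ η : Measure Y) : ℝ≥0∞ :=
  ⨅ q ∈ Cpl γ η, cost q

lemma matchDist_eq {Y : Type*} [MeasurableSpace Y] [PseudoEMetricSpace Y] (γ η : Measure Y) :
    matchDist γ η = (DD γ η) ^ (1/2 : ℝ) := rfl

/-- squared partial matching quantity -/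
def II (n : ℕ) (r : ℝ) (γ η : Measure (EucSp n)) : ℝ≥0∞ :=
  ⨅ (α : Measure (EucSp n)) (_ : α (sphere (0 : EucSp n) r)ᶜ = 0)
    (β : Measure (EucSp n)) (_ : β (sphere (0 : EucSp n) r)ᶜ = 0),
    DD (γ.restrict (ball (0 : EucSp n) r) + α) (η.restrict (ball (0 : EucSp n) r) + β)

lemma dPartial_eq (n : ℕ) (r : ℝ) (γ η : Measure (EucSp n)) :
    dPartial n r γ η = (II n r γ η) ^ (1/2 : ℝ) := by
  unfold dPartial II
  simp only [matchDist_eq, rpow_half_iInf]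

/-! ### The radial projection and its properties -/

variable {E : Type*} [NormedAddCommGroup E] [InnerProductSpace ℝ E]

/-- radial projection onto the closed ball of radius `r` -/
def proj (r : ℝ) (x : E) : E := if ‖x‖ ≤ r then x else (r / ‖x‖) • x

lemma proj_of_le {r : ℝ} {x : E} (h : ‖x‖ ≤ r) : proj r x = x := if_pos h

lemma norm_proj_of_ge {r : ℝ} (hr : 0 < r) {x : E} (h : r ≤ ‖x‖) : ‖proj r x‖ = r := by
  unfold proj
  split_ifs with h'
  · linarith [le_antisymm h' h]
  · rw [norm_smul]
    have hx : ‖x‖ ≠ 0 := by intro h0; rw [h0] at h; linarith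
    rw [Real.norm_eq_abs, abs_div, abs_of_pos hr, abs_of_nonneg (norm_nonneg x),
      div_mul_cancel₀ _ hx]

private lemma key_mixed {r : ℝ} (hr : 0 < r) {x y : E} (hx : ‖x‖ ≤ r) (hy : ¬ ‖y‖ ≤ r) :
    ‖x - (r / ‖y‖) • y‖ ^ 2 ≤ ‖x - y‖ ^ 2 := by
  push_neg at hy
  have hb : (0:ℝ) < ‖y‖ := lt_trans hr hy
  have hc : (inner ℝ x y : ℝ) ≤ ‖x‖ * ‖y‖ := real_inner_le_norm x y
  have h1 : ‖x - (r / ‖y‖) • y‖ ^ 2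
      = ‖x‖ ^ 2 - 2 * ((r / ‖y‖) * inner ℝ x y) + (r / ‖y‖) ^ 2 * ‖y‖ ^ 2 := by
    rw [norm_sub_sq_real, real_inner_smul_right, norm_smul, Real.norm_eq_abs, abs_div,
      abs_of_pos hr, abs_of_nonneg (norm_nonneg y)]
    ring
  have h2 : ‖x - y‖ ^ 2 = ‖x‖ ^ 2 - 2 * inner ℝ x y + ‖y‖ ^ 2 := norm_sub_sq_real x y
  rw [h1, h2]
  have he : (r / ‖y‖) * ‖y‖ = r := div_mul_cancel₀ _ (ne_of_gt hb)
  set e := r / ‖y‖ with hedef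
  have he1 : e ≤ 1 := by rw [hedef]; exact (div_le_one hb).2 hy.le
  have he0 : 0 ≤ e := by positivity
  have hxr : ‖x‖ * ‖y‖ ≤ r * ‖y‖ := by nlinarith
  nlinarith [mul_nonneg (sub_nonneg.2 he1) (sub_nonneg.2 (hc.trans hxr)), sq_nonneg (‖y‖ - r)]

lemma proj_nonexpansive {r : ℝ} (hr : 0 < r) (x y : E) :
    ‖proj r x - proj r y‖ ≤ ‖x - y‖ := by
  have main : ‖proj r x - proj r y‖ ^ 2 ≤ ‖x - y‖ ^ 2 := by
    unfold proj
    split_ifs with h1 h2 h2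
    · exact le_refl _
    · exact key_mixed hr h1 h2
    · rw [norm_sub_rev, norm_sub_rev x y]; exact key_mixed hr h2 h1
    · push_neg at h1 h2
      have ha : (0:ℝ) < ‖x‖ := lt_trans hr h1
      have hb : (0:ℝ) < ‖y‖ := lt_trans hr h2
      have hc : (inner ℝ x y : ℝ) ≤ ‖x‖ * ‖y‖ := real_inner_le_norm x y
      have h3 : ‖(r / ‖x‖) • x - (r / ‖y‖) • y‖ ^ 2
          = (r/‖x‖)^2 * ‖x‖^2 - 2 * ((r/‖x‖) * (r/‖y‖) * inner ℝ x y) + (r/‖y‖)^2 * ‖y‖^2 := by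
        rw [norm_sub_sq_real, real_inner_smul_left, real_inner_smul_right, norm_smul, norm_smul,
          Real.norm_eq_abs, Real.norm_eq_abs, abs_div, abs_div, abs_of_pos hr,
          abs_of_nonneg (norm_nonneg x), abs_of_nonneg (norm_nonneg y)]
        ring
      rw [h3, norm_sub_sq_real]
      have hx2 : (r/‖x‖)^2 * ‖x‖^2 = r^2 := by field_simp
      have hy2 : (r/‖y‖)^2 * ‖y‖^2 = r^2 := by field_simp
      rw [hx2, hy2]
      set d := (r/‖x‖) * (r/‖y‖) with hd
      have hd2 : d * (‖x‖ * ‖y‖) = r^2 := by rw [hd]; field_simp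
      have hd0 : 0 ≤ d := by positivity
      have hd1 : d ≤ 1 := by
        rw [hd]
        have : r / ‖x‖ ≤ 1 := (div_le_one ha).2 h1.le
        have : r / ‖y‖ ≤ 1 := (div_le_one hb).2 h2.le
        nlinarith [div_nonneg hr.le (norm_nonneg x), div_nonneg hr.le (norm_nonneg y)]
      nlinarith [mul_nonneg (sub_nonneg.2 hd1) (sub_nonneg.2 hc), sq_nonneg (‖x‖ - ‖y‖)]
  have h1 := norm_nonneg (proj r x - proj r y)
  have h2 := norm_nonneg (x - y)
  nlinarith [main]

/-! ### Monotonicity of the partial quantities -/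

variable {n : ℕ}

lemma medist : Measurable (fun p : EucSp n × EucSp n => edist p.1 p.2 ^ 2) :=
  ((ENNReal.continuous_pow 2).comp continuous_edist).measurable

lemma proj_measurable (r : ℝ) : Measurable (proj r : EucSp n → EucSp n) := by
  unfold proj
  exact Measurable.ite (measurableSet_le measurable_norm measurable_const)
    measurable_id ((measurable_const.div measurable_norm).smul measurable_id)

lemma proj_edist_le {r : ℝ} (hr : 0 < r) (x y : EucSp n) :
    edist (proj r x) (proj r y) ≤ edist x y := by
  rw [edist_dist, edist_dist, dist_eq_norm, dist_eq_norm]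
  exact ENNReal.ofReal_le_ofReal (proj_nonexpansive hr x y)

lemma DD_map_le {T : EucSp n → EucSp n} (hT : Measurable T)
    (hL : ∀ a b : EucSp n, edist (T a) (T b) ≤ edist a b) (μ ν : Measure (EucSp n)) :
    DD (μ.map T) (ν.map T) ≤ DD μ ν := by
  refine le_iInf₂ fun q hq => ?_
  obtain ⟨h1, h2⟩ := hq
  have hTT : Measurable (Prod.map T T) := hT.prodMap hT
  have hmem : q.map (Prod.map T T) ∈ Cpl (μ.map T) (ν.map T) := by
    constructor
    · rw [Measure.map_map measurable_fst hTT,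
        show (Prod.fst ∘ Prod.map T T) = T ∘ Prod.fst from rfl,
        ← Measure.map_map hT measurable_fst, h1]
    · rw [Measure.map_map measurable_snd hTT,
        show (Prod.snd ∘ Prod.map T T) = T ∘ Prod.snd from rfl,
        ← Measure.map_map hT measurable_snd, h2]
  refine le_trans (iInf₂_le _ hmem) ?_
  unfold cost
  rw [lintegral_map medist hTT]
  exact lintegral_mono fun p => pow_le_pow_left' (hL _ _) 2

lemma map_proj_restrict {r : ℝ} (hr : 0 < r) (μ : Measure (EucSp n)) :
    (μ.restrict (ball 0 r)).map (proj r) = μ.restrict (ball 0 r) := by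
  have h : (proj r : EucSp n → EucSp n) =ᵐ[μ.restrict (ball 0 r)] id := by
    refine (ae_restrict_mem measurableSet_ball).mono fun x hx => ?_
    have : ‖x‖ < r := by rwa [mem_ball, dist_zero_right] at hx
    exact proj_of_le this.le
  rw [Measure.map_congr h, Measure.map_id]

lemma map_proj_decomp {r : ℝ} (hr : 0 < r) (μ : Measure (EucSp n)) :
    μ.map (proj r) = μ.restrict (ball 0 r) + ((μ.restrict (ball 0 r)ᶜ).map (proj r)) := by
  nth_rewrite 1 [← Measure.restrict_add_restrict_compl (μ := μ)
    (s := ball (0 : EucSp n) r) measurableSet_ball]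
  rw [Measure.map_add _ _ (proj_measurable r), map_proj_restrict hr]

lemma map_proj_sphere {r : ℝ} (hr : 0 < r) (μ : Measure (EucSp n)) :
    ((μ.restrict (ball 0 r)ᶜ).map (proj r)) (sphere (0 : EucSp n) r)ᶜ = 0 := by
  rw [Measure.map_apply (proj_measurable r) isClosed_sphere.measurableSet.compl,
    Measure.restrict_apply (proj_measurable r isClosed_sphere.measurableSet.compl)]
  have he : (proj r ⁻¹' (sphere (0 : EucSp n) r)ᶜ) ∩ (ball 0 r)ᶜ = (∅ : Set (EucSp n)) := by
    rw [eq_empty_iff_forall_notMem]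
    rintro x ⟨hx1, hx2⟩
    apply hx1
    have hx : r ≤ ‖x‖ := by
      rw [mem_compl_iff, mem_ball, dist_zero_right, not_lt] at hx2
      exact hx2
    rw [mem_sphere_iff_norm, sub_zero]
    exact norm_proj_of_ge hr hx
  rw [he, measure_empty]

lemma II_le_DD {r : ℝ} (hr : 0 < r) (γ η μ ν : Measure (EucSp n))
    (h1 : μ.restrict (ball 0 r) = γ.restrict (ball 0 r))
    (h2 : ν.restrict (ball 0 r) = η.restrict (ball 0 r)) :
    II n r γ η ≤ DD μ ν := by
  have d1 := map_proj_decomp hr μ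
  have d2 := map_proj_decomp hr ν
  rw [h1] at d1
  rw [h2] at d2
  calc II n r γ η
      ≤ DD (γ.restrict (ball 0 r) + (μ.restrict (ball 0 r)ᶜ).map (proj r))
          (η.restrict (ball 0 r) + (ν.restrict (ball 0 r)ᶜ).map (proj r)) := by
        refine le_trans (iInf_le _ ((μ.restrict (ball (0 : EucSp n) r)ᶜ).map (proj r))) ?_
        refine le_trans (iInf_le _ (map_proj_sphere hr μ)) ?_
        refine le_trans (iInf_le _ ((ν.restrict (ball (0 : EucSp n) r)ᶜ).map (proj r))) ?_
        exact iInf_le _ (map_proj_sphere hr ν)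
    _ = DD (μ.map (proj r)) (ν.map (proj r)) := by rw [← d1, ← d2]
    _ ≤ DD μ ν := DD_map_le (proj_measurable r) (proj_edist_le hr) μ ν

lemma II_le_DD_full {r : ℝ} (hr : 0 < r) (γ η : Measure (EucSp n)) :
    II n r γ η ≤ DD γ η := II_le_DD hr γ η γ η rfl rfl

lemma II_mono {r s : ℝ} (hr : 0 < r) (hrs : r ≤ s) (γ η : Measure (EucSp n)) :
    II n r γ η ≤ II n s γ η := by
  have hb : ball (0 : EucSp n) r ⊆ (sphere (0 : EucSp n) s)ᶜ := by
    intro x hx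
    rw [mem_ball, dist_zero_right] at hx
    rw [mem_compl_iff, mem_sphere_iff_norm, sub_zero]
    intro h; rw [h] at hx; linarith
  refine le_iInf fun α => le_iInf fun hα => le_iInf fun β => le_iInf fun hβ => ?_
  refine II_le_DD hr γ η _ _ ?_ ?_
  · rw [Measure.restrict_add, Measure.restrict_restrict measurableSet_ball,
      inter_eq_self_of_subset_left (ball_subset_ball hrs),
      Measure.restrict_eq_zero.2 (measure_mono_null hb hα), add_zero]
  · rw [Measure.restrict_add, Measure.restrict_restrict measurableSet_ball,
      inter_eq_self_of_subset_left (ball_subset_ball hrs),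
      Measure.restrict_eq_zero.2 (measure_mono_null hb hβ), add_zero]

/-! ### Atomic structure of configurations -/

lemma config_atoms {γ : Measure (EucSp n)} (h : IsConfiguration γ) :
    ∃ S : Set (EucSp n), S.Countable ∧ γ Sᶜ = 0 ∧ ∀ y ∈ S, 1 ≤ γ {y} := by
  obtain ⟨ι, hι, f, rfl⟩ := h
  haveI := hι
  refine ⟨range f, countable_range f, ?_, ?_⟩
  · rw [Measure.sum_apply _ (countable_range f).measurableSet.compl]
    have : ∀ i, Measure.dirac (f i) (range f)ᶜ = 0 := by
      intro i
      rw [Measure.dirac_apply' _ (countable_range f).measurableSet.compl]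
      simp [Set.indicator_apply, mem_range_self]
    simp [this]
  · rintro y ⟨i, rfl⟩
    rw [Measure.sum_apply _ (measurableSet_singleton _)]
    refine le_trans ?_ (ENNReal.le_tsum i)
    rw [Measure.dirac_apply' _ (measurableSet_singleton _)]
    simp

lemma atomic_apply {γ : Measure (EucSp n)} {S : Set (EucSp n)} (hSc : S.Countable)
    (hSnull : γ Sᶜ = 0) {A : Set (EucSp n)} (hA : MeasurableSet A) :
    γ A = ∑' (a : ↥S), γ {(a : EucSp n)} * A.indicator 1 (a : EucSp n) := by
  have h2 : γ (A \ S) = 0 := measure_mono_null (diff_subset_compl A S) hSnull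
  have h1 : γ A = γ (A ∩ S) := by
    rw [← measure_inter_add_diff (μ := γ) A hSc.measurableSet, h2, add_zero]
  have h3 : A ∩ S = ⋃ a ∈ S, A ∩ {a} := by
    ext z; simp only [mem_inter_iff, mem_iUnion, mem_singleton_iff]
    constructor
    · rintro ⟨hz, hzS⟩; exact ⟨z, hzS, hz, rfl⟩
    · rintro ⟨a, haS, hz, rfl⟩; exact ⟨hz, haS⟩
  have h4 : γ (A ∩ S) = ∑' (a : ↥S), γ (A ∩ {(a : EucSp n)}) := by
    rw [h3]
    refine measure_biUnion hSc ?_ fun a _ => hA.inter (measurableSet_singleton a)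
    intro a ha b hb hab
    refine Set.disjoint_left.2 fun {z} hza hzb => hab ?_
    simp only [mem_inter_iff, mem_singleton_iff] at hza hzb
    rw [← hza.2, hzb.2]
  have h5 : ∀ a : ↥S, γ (A ∩ {(a : EucSp n)}) = γ {(a : EucSp n)} * A.indicator 1 (a : EucSp n) := by
    intro a
    by_cases ha : (a : EucSp n) ∈ A
    · rw [Set.indicator_of_mem ha, inter_eq_self_of_subset_right (singleton_subset_iff.2 ha)]
      simp
    · rw [Set.indicator_of_notMem ha]
      have hemp : A ∩ {(a : EucSp n)} = ∅ := by
        ext z; simp only [mem_inter_iff, mem_singleton_iff, mem_empty_iff_false, iff_false,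
          not_and]
        rintro hz rfl; exact ha hz
      simp [hemp]
  rw [h1, h4, tsum_congr h5]

lemma finite_of_atoms {η : Measure (EucSp n)} {T : Set (EucSp n)}
    (hTatom : ∀ y ∈ T, 1 ≤ η {y}) {R : ℝ} (hfin : η (ball (0 : EucSp n) R) ≠ ⊤) :
    (T ∩ ball (0 : EucSp n) R).Finite := by
  by_contra h
  have hinf : (T ∩ ball (0 : EucSp n) R).Infinite := h
  set e := hinf.natEmbedding
  apply hfin
  have hsub : (⋃ i : ℕ, ({(e i : EucSp n)} : Set (EucSp n))) ⊆ ball (0 : EucSp n) R := by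
    intro z hz
    simp only [mem_iUnion, mem_singleton_iff] at hz
    obtain ⟨i, rfl⟩ := hz
    exact (e i).2.2
  have hdisj : Pairwise (Function.onFun Disjoint fun i : ℕ => ({(e i : EucSp n)} : Set (EucSp n))) := by
    intro a b hab
    simp only [Function.onFun, Set.disjoint_singleton]
    intro hh
    exact hab (e.injective (Subtype.ext hh))
  have := measure_iUnion (μ := η) hdisj fun i => measurableSet_singleton _
  have htop : η (⋃ i : ℕ, ({(e i : EucSp n)} : Set (EucSp n))) = ⊤ := by
    rw [this]
    rw [eq_top_iff]
    calc (⊤ : ℝ≥0∞) = ∑' _ : ℕ, (1 : ℝ≥0∞) :=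
          (ENNReal.tsum_const_eq_top_of_ne_zero one_ne_zero).symm
      _ ≤ _ := ENNReal.tsum_le_tsum fun i => hTatom _ (e i).2.1
  rw [eq_top_iff, ← htop]
  exact measure_mono hsub

lemma ultrafilter_limit_exists (𝒰 : Ultrafilter ℕ) (a : ℕ → ℝ≥0∞) :
    ∃ l, Tendsto a (𝒰 : Filter ℕ) (𝓝 l) := by
  obtain ⟨l, -, hl⟩ := (isCompact_univ (X := ℝ≥0∞)).ultrafilter_le_nhds (𝒰.map a)
    (by simp [le_principal_iff])
  exact ⟨l, hl⟩

lemma tendsto_M_div (M : ℝ≥0∞) (hM : M ≠ ⊤) :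
    Tendsto (fun j : ℕ => M / ((j : ℝ≥0∞) + 1) ^ 2) atTop (𝓝 0) := by
  have h0 : Tendsto (fun j : ℕ => ((j : ℝ≥0∞))⁻¹) atTop (𝓝 0) :=
    ENNReal.tendsto_inv_nat_nhds_zero
  have h1 : Tendsto (fun j : ℕ => M * ((j : ℝ≥0∞))⁻¹) atTop (𝓝 (M * 0)) :=
    ENNReal.Tendsto.const_mul h0 (Or.inr hM)
  rw [mul_zero] at h1
  refine tendsto_of_tendsto_of_tendsto_of_le_of_le tendsto_const_nhds h1
    (fun j => zero_le) fun j => ?_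
  rw [← div_eq_mul_inv]
  refine ENNReal.div_le_div_left ?_ M
  calc (j : ℝ≥0∞) ≤ (j : ℝ≥0∞) + 1 := le_self_add
    _ ≤ ((j : ℝ≥0∞) + 1) ^ 2 := le_self_pow₀ (le_add_self) two_ne_zero

/-! ### The key limit lemma: rows of the limiting matrix sum to the atom masses -/

lemma row_sum (γ η : Measure (EucSp n))
    (hγf : ∀ R : ℝ, γ (ball (0 : EucSp n) R) ≠ ⊤)
    (hηf : ∀ R : ℝ, η (ball (0 : EucSp n) R) ≠ ⊤)
    (T : Set (EucSp n)) (hTc : T.Countable) (hTnull : η Tᶜ = 0)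
    (hTatom : ∀ y ∈ T, 1 ≤ η {y})
    (M : ℝ≥0∞) (hM : M ≠ ⊤)
    (q : ℕ → Measure (EucSp n × EucSp n)) (α β : ℕ → Measure (EucSp n))
    (hα : ∀ k : ℕ, (α k) (sphere (0 : EucSp n) ((k : ℝ) + 1))ᶜ = 0)
    (hβ : ∀ k : ℕ, (β k) (sphere (0 : EucSp n) ((k : ℝ) + 1))ᶜ = 0)
    (h1 : ∀ k : ℕ, (q k).map Prod.fst = γ.restrict (ball (0 : EucSp n) ((k : ℝ) + 1)) + α k)
    (h2 : ∀ k : ℕ, (q k).map Prod.snd = η.restrict (ball (0 : EucSp n) ((k : ℝ) + 1)) + β k)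
    (hc : ∀ k : ℕ, cost (q k) ≤ M)
    (𝒰 : Ultrafilter ℕ) (h𝒰 : (𝒰 : Filter ℕ) ≤ atTop)
    (m : EucSp n → EucSp n → ℝ≥0∞)
    (hm : ∀ x y, Tendsto (fun k => (q k) {(x, y)}) (𝒰 : Filter ℕ) (𝓝 (m x y)))
    (x : EucSp n) :
    ∑' (y : ↥T), m x (y : EucSp n) = γ {x} := by
  have hxfin : γ {x} ≠ ⊤ :=
    ne_top_of_le_ne_top (hγf (‖x‖ + 1))
      (measure_mono (singleton_subset_iff.2 (by rw [mem_ball, dist_zero_right]; linarith)))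
  -- the first marginal of `q k` at `{x}`
  have hfst : ∀ k : ℕ, ‖x‖ < (k : ℝ) + 1 →
      q k ({x} ×ˢ (univ : Set (EucSp n))) = γ {x} := by
    intro k hk
    have hpre : (Prod.fst ⁻¹' ({x} : Set (EucSp n)) : Set (EucSp n × EucSp n))
        = {x} ×ˢ (univ : Set (EucSp n)) := by
      ext ⟨a, b⟩; simp [eq_comm]
    rw [← hpre, ← Measure.map_apply measurable_fst (measurableSet_singleton x), h1 k,
      Measure.add_apply, Measure.restrict_apply (measurableSet_singleton x)]
    have hxb : ({x} : Set (EucSp n)) ∩ ball 0 ((k : ℝ) + 1) = {x} := by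
      refine inter_eq_self_of_subset_left (singleton_subset_iff.2 ?_)
      rw [mem_ball, dist_zero_right]; exact hk
    have hα0 : α k {x} = 0 := by
      refine measure_mono_null (singleton_subset_iff.2 ?_) (hα k)
      rw [mem_compl_iff, mem_sphere_iff_norm, sub_zero]
      exact ne_of_lt hk
    rw [hxb, hα0, add_zero]
  have hev1 : ∀ᶠ k : ℕ in (𝒰 : Filter ℕ), ‖x‖ < (k : ℝ) + 1 := by
    refine Eventually.filter_mono h𝒰 ?_
    filter_upwards [eventually_ge_atTop ⌈‖x‖⌉₊] with k hk
    have ha : ‖x‖ ≤ (⌈‖x‖⌉₊ : ℝ) := Nat.le_ceil _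
    have hb : ((⌈‖x‖⌉₊ : ℕ) : ℝ) ≤ (k : ℝ) := Nat.cast_le.2 hk
    linarith
  -- upper bound
  have hub : ∑' (y : ↥T), m x (y : EucSp n) ≤ γ {x} := by
    rw [ENNReal.tsum_eq_iSup_sum]
    refine iSup_le fun G => ?_
    refine le_of_tendsto (tendsto_finset_sum G fun y _ => hm x (y : EucSp n)) ?_
    filter_upwards [hev1] with k hk
    have hGsum : ∑ y ∈ G, q k {(x, (y : EucSp n))}
        = q k (⋃ y ∈ G, ({(x, (y : EucSp n))} : Set (EucSp n × EucSp n))) := by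
      refine (measure_biUnion_finset ?_ fun y _ => measurableSet_singleton _).symm
      intro a _ b _ hab
      rw [Function.onFun, Set.disjoint_singleton]
      exact fun hh => hab (Subtype.ext (congrArg Prod.snd hh))
    rw [hGsum]
    refine le_trans (measure_mono ?_) (le_of_eq (hfst k hk))
    intro p hp
    simp only [mem_iUnion, mem_singleton_iff] at hp
    obtain ⟨y, _, rfl⟩ := hp
    exact ⟨rfl, mem_univ _⟩
  have hfin2 : (∑' (y : ↥T), m x (y : EucSp n)) ≠ ⊤ := ne_top_of_le_ne_top hxfin hub
  -- lower bound with error `M / (j+1)^2`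
  have hlb : ∀ j : ℕ,
      γ {x} ≤ (∑' (y : ↥T), m x (y : EucSp n)) + M / ((j : ℝ≥0∞) + 1) ^ 2 := by
    intro j
    set R : ℝ := ‖x‖ + ((j : ℝ) + 1) with hR
    have hfinT : (T ∩ ball (0 : EucSp n) R).Finite := finite_of_atoms hTatom (hηf R)
    haveI := hfinT.fintype
    have hev2 : ∀ᶠ k : ℕ in (𝒰 : Filter ℕ), R ≤ (k : ℝ) + 1 := by
      refine Eventually.filter_mono h𝒰 ?_
      filter_upwards [eventually_ge_atTop ⌈R⌉₊] with k hk
      have ha : R ≤ (⌈R⌉₊ : ℝ) := Nat.le_ceil _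
      have hb : ((⌈R⌉₊ : ℕ) : ℝ) ≤ (k : ℝ) := Nat.cast_le.2 hk
      linarith
    have key : ∀ᶠ k : ℕ in (𝒰 : Filter ℕ),
        γ {x} ≤ (∑ y : ↥(T ∩ ball (0 : EucSp n) R), q k {(x, (y : EucSp n))})
          + M / ((j : ℝ≥0∞) + 1) ^ 2 := by
      filter_upwards [hev2] with k hk2
      have hjR : ‖x‖ < R := by rw [hR]; have : (0:ℝ) ≤ (j:ℝ) := Nat.cast_nonneg j; linarith
      have hk1 : ‖x‖ < (k : ℝ) + 1 := lt_of_lt_of_le hjR hk2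
      -- splitting
      have hsplit : γ {x} ≤ q k ({x} ×ˢ (T ∩ ball (0 : EucSp n) R))
          + (q k ({x} ×ˢ (Tᶜ ∩ ball (0 : EucSp n) R))
             + q k ({x} ×ˢ (ball (0 : EucSp n) R)ᶜ)) := by
        rw [← hfst k hk1]
        refine le_trans (measure_mono ?_)
          ((measure_union_le _ _).trans (add_le_add_right (measure_union_le _ _) _))
        rintro ⟨a, b⟩ ⟨ha, -⟩
        by_cases hb1 : b ∈ ball (0 : EucSp n) R
        · by_cases hb2 : b ∈ T
          · exact Or.inl ⟨ha, hb2, hb1⟩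
          · exact Or.inr (Or.inl ⟨ha, hb2, hb1⟩)
        · exact Or.inr (Or.inr ⟨ha, hb1⟩)
      -- the middle term vanishes
      have hmidset : MeasurableSet (Tᶜ ∩ ball (0 : EucSp n) R) :=
        hTc.measurableSet.compl.inter measurableSet_ball
      have hmid : q k ({x} ×ˢ (Tᶜ ∩ ball (0 : EucSp n) R)) = 0 := by
        have h0 : q k (Prod.snd ⁻¹' (Tᶜ ∩ ball (0 : EucSp n) R)) = 0 := by
          rw [← Measure.map_apply measurable_snd hmidset, h2 k, Measure.add_apply,
            Measure.restrict_apply hmidset]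
          have e1 : η ((Tᶜ ∩ ball (0 : EucSp n) R) ∩ ball 0 ((k : ℝ) + 1)) = 0 :=
            measure_mono_null (fun z hz => hz.1.1) hTnull
          have e2 : β k (Tᶜ ∩ ball (0 : EucSp n) R) = 0 := by
            refine measure_mono_null (fun z hz => ?_) (hβ k)
            have hz2 : ‖z‖ < R := by
              have := hz.2; rwa [mem_ball, dist_zero_right] at this
            rw [mem_compl_iff, mem_sphere_iff_norm, sub_zero]
            intro hh; rw [hh] at hz2; linarith
          rw [e1, e2, add_zero]
        exact measure_mono_null (fun p hp => hp.2) h0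
      -- the tail term is controlled by the cost
      have hofR : ENNReal.ofReal ((j : ℝ) + 1) = (j : ℝ≥0∞) + 1 := by
        rw [ENNReal.ofReal_add (Nat.cast_nonneg j) zero_le_one, ENNReal.ofReal_natCast,
          ENNReal.ofReal_one]
      have hjne : ((j : ℝ≥0∞) + 1) ^ 2 ≠ 0 :=
        pow_ne_zero 2 (lt_of_lt_of_le zero_lt_one le_add_self).ne'
      have hjnt : ((j : ℝ≥0∞) + 1) ^ 2 ≠ ⊤ :=
        ENNReal.pow_ne_top (ENNReal.add_ne_top.2 ⟨ENNReal.natCast_ne_top j, ENNReal.one_ne_top⟩)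
      have htail : q k ({x} ×ˢ (ball (0 : EucSp n) R)ᶜ) ≤ M / ((j : ℝ≥0∞) + 1) ^ 2 := by
        have hmeas : MeasurableSet ({x} ×ˢ (ball (0 : EucSp n) R)ᶜ :
            Set (EucSp n × EucSp n)) :=
          (measurableSet_singleton x).prod measurableSet_ball.compl
        have hc2 : ((j : ℝ≥0∞) + 1) ^ 2 * q k ({x} ×ˢ (ball (0 : EucSp n) R)ᶜ)
            ≤ cost (q k) := by
          calc ((j : ℝ≥0∞) + 1) ^ 2 * q k ({x} ×ˢ (ball (0 : EucSp n) R)ᶜ)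
              = ∫⁻ _ in {x} ×ˢ (ball (0 : EucSp n) R)ᶜ, ((j : ℝ≥0∞) + 1) ^ 2 ∂(q k) :=
                (setLIntegral_const _ _).symm
            _ ≤ ∫⁻ p in {x} ×ˢ (ball (0 : EucSp n) R)ᶜ, edist p.1 p.2 ^ 2 ∂(q k) := by
                refine setLIntegral_mono medist fun p hp => ?_
                obtain ⟨hp1, hp2⟩ := hp
                have hp1' : p.1 = x := hp1
                have hyn : R ≤ ‖p.2‖ := by
                  rw [mem_compl_iff, mem_ball, dist_zero_right, not_lt] at hp2
                  exact hp2
                have hdist : (j : ℝ) + 1 ≤ dist p.1 p.2 := by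
                  have htri : dist p.2 0 ≤ dist p.2 x + dist x 0 := dist_triangle _ _ _
                  rw [dist_zero_right, dist_zero_right] at htri
                  rw [hp1', dist_comm]
                  have : R - ‖x‖ ≤ dist p.2 x := by linarith
                  rw [hR] at this; linarith
                have hedist : ((j : ℝ≥0∞) + 1) ≤ edist p.1 p.2 := by
                  rw [edist_dist, ← hofR]
                  exact ENNReal.ofReal_le_ofReal hdist
                exact pow_le_pow_left' hedist 2
            _ ≤ cost (q k) := setLIntegral_le_lintegral _ _
        rw [ENNReal.le_div_iff_mul_le (Or.inl hjne) (Or.inl hjnt)]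
        calc q k ({x} ×ˢ (ball (0 : EucSp n) R)ᶜ) * ((j : ℝ≥0∞) + 1) ^ 2
            = ((j : ℝ≥0∞) + 1) ^ 2 * q k ({x} ×ˢ (ball (0 : EucSp n) R)ᶜ) := mul_comm _ _
          _ ≤ cost (q k) := hc2
          _ ≤ M := hc k
      -- the head term as a finite sum
      have hhead : q k ({x} ×ˢ (T ∩ ball (0 : EucSp n) R))
          = ∑ y : ↥(T ∩ ball (0 : EucSp n) R), q k {(x, (y : EucSp n))} := by
        have hset : ({x} ×ˢ (T ∩ ball (0 : EucSp n) R) : Set (EucSp n × EucSp n))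
            = ⋃ y ∈ (T ∩ ball (0 : EucSp n) R), ({(x, y)} : Set (EucSp n × EucSp n)) := by
          ext ⟨a, b⟩
          simp only [mem_prod, mem_singleton_iff, mem_iUnion, Prod.mk.injEq]
          constructor
          · rintro ⟨rfl, hb⟩; exact ⟨b, hb, rfl, rfl⟩
          · rintro ⟨y, hy, rfl, rfl⟩; exact ⟨rfl, hy⟩
        have hdd : (T ∩ ball (0 : EucSp n) R).PairwiseDisjoint
            (fun y => ({(x, y)} : Set (EucSp n × EucSp n))) := by
          intro a _ b _ hab
          rw [Function.onFun, Set.disjoint_singleton]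
          exact fun hh => hab (congrArg Prod.snd hh)
        rw [hset, measure_biUnion hfinT.countable hdd fun y _ => measurableSet_singleton _,
          ← tsum_fintype (L := SummationFilter.unconditional _)]
      have := hsplit
      rw [hmid, zero_add, hhead] at this
      exact this.trans (add_le_add_right htail _)
    -- pass to the ultrafilter limit
    have hlim : Tendsto (fun k =>
        (∑ y : ↥(T ∩ ball (0 : EucSp n) R), q k {(x, (y : EucSp n))})
          + M / ((j : ℝ≥0∞) + 1) ^ 2) (𝒰 : Filter ℕ)
        (𝓝 ((∑ y : ↥(T ∩ ball (0 : EucSp n) R), m x (y : EucSp n))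
          + M / ((j : ℝ≥0∞) + 1) ^ 2)) :=
      Tendsto.add (tendsto_finset_sum _ fun y _ => hm x (y : EucSp n)) tendsto_const_nhds
    refine le_trans (ge_of_tendsto hlim key) (add_le_add_left ?_ _)
    rw [← tsum_fintype (L := SummationFilter.unconditional _)]
    exact tsum_comp_le_tsum_of_injective
      (Set.inclusion_injective (inter_subset_left (s := T) (t := ball (0 : EucSp n) R)))
      (fun y : ↥T => m x (y : EucSp n))
  -- conclude
  have hlimj : Tendsto (fun j : ℕ =>
      (∑' (y : ↥T), m x (y : EucSp n)) + M / ((j : ℝ≥0∞) + 1) ^ 2) atTop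
      (𝓝 ((∑' (y : ↥T), m x (y : EucSp n)) + 0)) :=
    Tendsto.add tendsto_const_nhds (tendsto_M_div M hM)
  rw [add_zero] at hlimj
  exact le_antisymm hub (ge_of_tendsto hlimj (Eventually.of_forall hlb))

/-! ### The limit coupling -/

lemma DD_le_iSup (γ η : Measure (EucSp n))
    (hγ : IsConfiguration γ) (hη : IsConfiguration η)
    (hγf : ∀ R : ℝ, γ (ball (0 : EucSp n) R) ≠ ⊤)
    (hηf : ∀ R : ℝ, η (ball (0 : EucSp n) R) ≠ ⊤) :
    DD γ η ≤ ⨆ k : ℕ, II n ((k : ℝ) + 1) γ η := by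
  set L := ⨆ k : ℕ, II n ((k : ℝ) + 1) γ η with hLdef
  refine ENNReal.le_of_forall_pos_le_add fun ε hε hLtop => ?_
  set M := L + (ε : ℝ≥0∞) with hMdef
  have hM : M ≠ ⊤ := by
    rw [hMdef]; exact ENNReal.add_ne_top.2 ⟨hLtop.ne, ENNReal.coe_ne_top⟩
  obtain ⟨S, hSc, hSnull, hSatom⟩ := config_atoms hγ
  obtain ⟨T, hTc, hTnull, hTatom⟩ := config_atoms hη
  have hpick : ∀ k : ℕ, ∃ (q : Measure (EucSp n × EucSp n)) (α β : Measure (EucSp n)),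
      α (sphere (0 : EucSp n) ((k : ℝ) + 1))ᶜ = 0 ∧
      β (sphere (0 : EucSp n) ((k : ℝ) + 1))ᶜ = 0 ∧
      q.map Prod.fst = γ.restrict (ball (0 : EucSp n) ((k : ℝ) + 1)) + α ∧
      q.map Prod.snd = η.restrict (ball (0 : EucSp n) ((k : ℝ) + 1)) + β ∧
      cost q ≤ M := by
    intro k
    have hlt : II n ((k : ℝ) + 1) γ η < M := by
      refine lt_of_le_of_lt (le_iSup (fun k : ℕ => II n ((k : ℝ) + 1) γ η) k) ?_
      rw [hMdef]
      exact ENNReal.lt_add_right hLtop.ne (by exact_mod_cast hε.ne')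
    rw [II] at hlt
    obtain ⟨α, hlt⟩ := iInf_lt_iff.1 hlt
    obtain ⟨hα, hlt⟩ := iInf_lt_iff.1 hlt
    obtain ⟨β, hlt⟩ := iInf_lt_iff.1 hlt
    obtain ⟨hβ, hlt⟩ := iInf_lt_iff.1 hlt
    rw [DD] at hlt
    obtain ⟨q, hlt⟩ := iInf_lt_iff.1 hlt
    obtain ⟨hq, hlt⟩ := iInf_lt_iff.1 hlt
    exact ⟨q, α, β, hα, hβ, hq.1, hq.2, hlt.le⟩
  choose q α β hα hβ h1 h2 hc using hpick
  obtain ⟨𝒰, h𝒰⟩ := Ultrafilter.exists_le (atTop : Filter ℕ)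
  have hmex : ∀ x y : EucSp n, ∃ l,
      Tendsto (fun k => (q k) {(x, y)}) (𝒰 : Filter ℕ) (𝓝 l) :=
    fun x y => ultrafilter_limit_exists 𝒰 _
  choose m hm using hmex
  have rowEq : ∀ x : EucSp n, ∑' (y : ↥T), m x (y : EucSp n) = γ {x} :=
    row_sum γ η hγf hηf T hTc hTnull hTatom M hM q α β hα hβ h1 h2 hc 𝒰 h𝒰 m hm
  have colEq : ∀ y : EucSp n, ∑' (xx : ↥S), m (xx : EucSp n) y = η {y} := by
    set q' : ℕ → Measure (EucSp n × EucSp n) := fun k => (q k).map Prod.swap with hq'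
    have h1' : ∀ k : ℕ, (q' k).map Prod.fst
        = η.restrict (ball (0 : EucSp n) ((k : ℝ) + 1)) + β k := by
      intro k
      rw [hq']
      rw [Measure.map_map measurable_fst measurable_swap,
        show (Prod.fst ∘ Prod.swap : EucSp n × EucSp n → EucSp n) = Prod.snd from rfl, h2 k]
    have h2' : ∀ k : ℕ, (q' k).map Prod.snd
        = γ.restrict (ball (0 : EucSp n) ((k : ℝ) + 1)) + α k := by
      intro k
      rw [hq']
      rw [Measure.map_map measurable_snd measurable_swap,
        show (Prod.snd ∘ Prod.swap : EucSp n × EucSp n → EucSp n) = Prod.fst from rfl, h1 k]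
    have hc' : ∀ k : ℕ, cost (q' k) ≤ M := by
      intro k
      have hcc : cost (q' k) = cost (q k) := by
        rw [hq']
        unfold cost
        rw [lintegral_map medist measurable_swap]
        exact lintegral_congr fun p => by rw [Prod.snd_swap, Prod.fst_swap, edist_comm]
      rw [hcc]; exact hc k
    have hm' : ∀ y x : EucSp n,
        Tendsto (fun k => (q' k) {(y, x)}) (𝒰 : Filter ℕ) (𝓝 (m x y)) := by
      intro y x
      have heq : (fun k => (q' k) {(y, x)}) = fun k => (q k) {(x, y)} := by
        funext k
        rw [hq']
        rw [Measure.map_apply measurable_swap (measurableSet_singleton _)]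
        congr 1
        ext ⟨a, b⟩
        simp [Prod.ext_iff, and_comm]
      rw [heq]; exact hm x y
    intro y
    exact row_sum η γ hηf hγf S hSc hSnull hSatom M hM q' β α hβ hα h1' h2' hc' 𝒰 h𝒰
      (fun a b => m b a) (fun a b => hm' a b) y
  -- the limit coupling
  set Q : Measure (EucSp n × EucSp n) := Measure.sum
    (fun p : ↥S × ↥T =>
      (m (p.1 : EucSp n) (p.2 : EucSp n)) •
        Measure.dirac ((p.1 : EucSp n), (p.2 : EucSp n))) with hQdef
  have hQ1 : Q.map Prod.fst = γ := by
    ext A hA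
    rw [Measure.map_apply measurable_fst hA, hQdef,
      Measure.sum_apply _ (hA.preimage measurable_fst)]
    have hterm : ∀ p : ↥S × ↥T,
        ((m (p.1 : EucSp n) (p.2 : EucSp n)) •
          Measure.dirac ((p.1 : EucSp n), (p.2 : EucSp n))) (Prod.fst ⁻¹' A)
          = m (p.1 : EucSp n) (p.2 : EucSp n) * A.indicator 1 (p.1 : EucSp n) := by
      intro p
      rw [Measure.smul_apply, smul_eq_mul,
        Measure.dirac_apply' _ (hA.preimage measurable_fst)]
      congr 1
    rw [tsum_congr hterm, ENNReal.tsum_prod']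
    have hrow : ∀ a : ↥S,
        ∑' (b : ↥T), m (a : EucSp n) (b : EucSp n) * A.indicator 1 (a : EucSp n)
          = γ {(a : EucSp n)} * A.indicator 1 (a : EucSp n) := by
      intro a; rw [ENNReal.tsum_mul_right, rowEq (a : EucSp n)]
    rw [tsum_congr hrow, ← atomic_apply hSc hSnull hA]
  have hQ2 : Q.map Prod.snd = η := by
    ext A hA
    rw [Measure.map_apply measurable_snd hA, hQdef,
      Measure.sum_apply _ (hA.preimage measurable_snd)]
    have hterm : ∀ p : ↥S × ↥T,
        ((m (p.1 : EucSp n) (p.2 : EucSp n)) •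
          Measure.dirac ((p.1 : EucSp n), (p.2 : EucSp n))) (Prod.snd ⁻¹' A)
          = m (p.1 : EucSp n) (p.2 : EucSp n) * A.indicator 1 (p.2 : EucSp n) := by
      intro p
      rw [Measure.smul_apply, smul_eq_mul,
        Measure.dirac_apply' _ (hA.preimage measurable_snd)]
      congr 1
    rw [tsum_congr hterm, ENNReal.tsum_prod', ENNReal.tsum_comm]
    have hcol : ∀ b : ↥T,
        ∑' (a : ↥S), m (a : EucSp n) (b : EucSp n) * A.indicator 1 (b : EucSp n)
          = η {(b : EucSp n)} * A.indicator 1 (b : EucSp n) := by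
      intro b; rw [ENNReal.tsum_mul_right, colEq (b : EucSp n)]
    rw [tsum_congr hcol, ← atomic_apply hTc hTnull hA]
  have hQcost : cost Q ≤ M := by
    have hQc : cost Q = ∑' (p : ↥S × ↥T),
        m (p.1 : EucSp n) (p.2 : EucSp n)
          * edist (p.1 : EucSp n) (p.2 : EucSp n) ^ 2 := by
      rw [hQdef]
      unfold cost
      rw [lintegral_sum_measure]
      refine tsum_congr fun p => ?_
      rw [lintegral_smul_measure, lintegral_dirac' _ medist, smul_eq_mul]
    rw [hQc, ENNReal.tsum_eq_iSup_sum]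
    refine iSup_le fun G => ?_
    have hfin : ∀ k : ℕ,
        ∑ p ∈ G, (q k) {((p.1 : EucSp n), (p.2 : EucSp n))}
          * edist (p.1 : EucSp n) (p.2 : EucSp n) ^ 2 ≤ M := by
      intro k
      classical
      set F : Finset (EucSp n × EucSp n) :=
        G.image (fun p : ↥S × ↥T => ((p.1 : EucSp n), (p.2 : EucSp n))) with hF
      have hinj : ∀ a ∈ G, ∀ b ∈ G,
          ((a.1 : EucSp n), (a.2 : EucSp n)) = ((b.1 : EucSp n), (b.2 : EucSp n))
          → a = b := by
        intro a _ b _ hab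
        have ha1 := congrArg Prod.fst hab
        have ha2 := congrArg Prod.snd hab
        exact Prod.ext (Subtype.ext ha1) (Subtype.ext ha2)
      have hsum : ∑ p ∈ G, (q k) {((p.1 : EucSp n), (p.2 : EucSp n))}
          * edist (p.1 : EucSp n) (p.2 : EucSp n) ^ 2
          = ∑ z ∈ F, edist z.1 z.2 ^ 2 * (q k) {z} := by
        rw [hF, Finset.sum_image hinj]
        exact Finset.sum_congr rfl fun p _ => mul_comm _ _
      calc ∑ p ∈ G, (q k) {((p.1 : EucSp n), (p.2 : EucSp n))}
            * edist (p.1 : EucSp n) (p.2 : EucSp n) ^ 2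
          = ∑ z ∈ F, edist z.1 z.2 ^ 2 * (q k) {z} := hsum
        _ = ∫⁻ z in ↑F, edist z.1 z.2 ^ 2 ∂(q k) := (lintegral_finset F _).symm
        _ ≤ cost (q k) := setLIntegral_le_lintegral _ _
        _ ≤ M := hc k
    have htend : Tendsto (fun k => ∑ p ∈ G,
        (q k) {((p.1 : EucSp n), (p.2 : EucSp n))}
          * edist (p.1 : EucSp n) (p.2 : EucSp n) ^ 2) (𝒰 : Filter ℕ)
        (𝓝 (∑ p ∈ G, m (p.1 : EucSp n) (p.2 : EucSp n)
          * edist (p.1 : EucSp n) (p.2 : EucSp n) ^ 2)) :=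
      tendsto_finset_sum G fun p _ => ENNReal.Tendsto.mul_const (hm _ _)
        (Or.inr (ENNReal.pow_ne_top (edist_ne_top _ _)))
    exact le_of_tendsto htend (Eventually.of_forall hfin)
  calc DD γ η ≤ cost Q := iInf₂_le Q ⟨hQ1, hQ2⟩
    _ ≤ M := hQcost

end StatementTwo

/-- The partial matching pseudo-distances are monotone increasing in `r`,
dominated by the full ℓ²-matching extended distance, and converge pointwise (monotonically)
to it: `d_Υ^(r) ≤ d_Υ^(s) ≤ d_Υ` for `0 < r ≤ s`, and
`d_Υ^(r)(γ,η) ↑ d_Υ(γ,η)` as `r ↑ ∞`. -/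
theorem dPartial_mono_tendsto_matchDist (n : ℕ) (γ η : Measure (EucSp n))
    (hγ : IsConfiguration γ) (hη : IsConfiguration η)
    (hγf : ∀ R : ℝ, γ (ball (0 : EucSp n) R) ≠ ⊤)
    (hηf : ∀ R : ℝ, η (ball (0 : EucSp n) R) ≠ ⊤) :
    (∀ r s : ℝ, 0 < r → r ≤ s →
      dPartial n r γ η ≤ dPartial n s γ η ∧ dPartial n s γ η ≤ matchDist γ η) ∧
    Tendsto (fun r : ℝ => dPartial n r γ η) atTop (𝓝 (matchDist γ η)) := by
  open StatementTwo in
  constructor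
  · intro r s hr hrs
    constructor
    · rw [dPartial_eq, dPartial_eq]
      exact ENNReal.rpow_le_rpow (II_mono hr hrs γ η) (by norm_num)
    · rw [dPartial_eq, matchDist_eq]
      exact ENNReal.rpow_le_rpow (II_le_DD_full (lt_of_lt_of_le hr hrs) γ η) (by norm_num)
  · have hDD : DD γ η = ⨆ k : ℕ, II n ((k : ℝ) + 1) γ η :=
      le_antisymm (DD_le_iSup γ η hγ hη hγf hηf)
        (iSup_le fun k => II_le_DD_full (by positivity) γ η)
    have hkey : matchDist γ η = ⨆ k : ℕ, dPartial n ((k : ℝ) + 1) γ η := by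
      have hsc : (⨆ k : ℕ, (II n ((k : ℝ) + 1) γ η) ^ (1/2 : ℝ))
          = ⨆ k : ℕ, dPartial n ((k : ℝ) + 1) γ η :=
        iSup_congr fun k => (dPartial_eq n ((k : ℝ) + 1) γ η).symm
      rw [matchDist_eq, hDD, ← rpow_half_iSup, hsc]
    refine tendsto_order.2 ⟨?_, ?_⟩
    · intro b hb
      rw [hkey] at hb
      obtain ⟨k, hk⟩ := lt_iSup_iff.1 hb
      filter_upwards [eventually_ge_atTop ((k : ℝ) + 1)] with r hrk
      refine lt_of_lt_of_le hk ?_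
      rw [dPartial_eq, dPartial_eq]
      exact ENNReal.rpow_le_rpow (II_mono (by positivity) hrk γ η) (by norm_num)
    · intro b hb
      filter_upwards [eventually_ge_atTop (1 : ℝ)] with r hr1
      refine lt_of_le_of_lt ?_ hb
      rw [dPartial_eq, matchDist_eq]
      exact ENNReal.rpow_le_rpow
        (II_le_DD_full (lt_of_lt_of_le zero_lt_one hr1) γ η) (by norm_num)
end
end

section
/- A sequence γ_n converges to γ in the vague topology on Υ(ℝⁿ) if and only if d_Υ^(r)(γ_n, γ) → 0 for every r > 0. -/
open MeasureTheory ENNReal Metric Set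

noncomputable section

open Filter Topology


section Config
variable {X : Type*} [MeasurableSpace X]

variable {X : Type*} [MeasurableSpace X]

lemma config_apply {ι : Type} [Countable ι] (f : ι → X) {S : Set X} (hS : MeasurableSet S) :
    (Measure.sum fun i => Measure.dirac (f i)) S = ∑' i, S.indicator (1 : X → ℝ≥0∞) (f i) := by
  rw [Measure.sum_apply _ hS]
  exact tsum_congr fun i => Measure.dirac_apply' _ hS

lemma config_finite {ι : Type} [Countable ι] (f : ι → X) {S : Set X} (hS : MeasurableSet S)
    (h : (Measure.sum fun i => Measure.dirac (f i)) S ≠ ⊤) : {i | f i ∈ S}.Finite := by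
  by_contra hinf
  apply h
  rw [config_apply f hS]
  have h1 : ∀ i : {i | f i ∈ S}, S.indicator (1 : X → ℝ≥0∞) (f i) = 1 := by
    rintro ⟨i, hi⟩
    have hi' : f i ∈ S := hi
    rw [Set.indicator_of_mem hi', Pi.one_apply]
  have : (⊤ : ℝ≥0∞) = ∑' i : {i | f i ∈ S}, S.indicator (1 : X → ℝ≥0∞) (f i) := by
    rw [tsum_congr h1]
    haveI : Infinite {i | f i ∈ S} := Set.infinite_coe_iff.2 hinf
    exact (ENNReal.tsum_const_eq_top_of_ne_zero one_ne_zero).symm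
  rw [eq_top_iff, this, tsum_subtype {i | f i ∈ S} (fun i => S.indicator (1 : X → ℝ≥0∞) (f i))]
  exact ENNReal.tsum_le_tsum fun i => Set.indicator_le_self _ _ i

lemma config_sum_eq {ι : Type} [Countable ι] (f : ι → X) {S : Set X} (hS : MeasurableSet S)
    (hfin : {i | f i ∈ S}.Finite) :
    (Measure.sum fun i => Measure.dirac (f i)) S = (hfin.toFinset.card : ℝ≥0∞) := by
  rw [config_apply f hS]
  rw [tsum_eq_sum (s := hfin.toFinset) (by
    intro b hb
    simp only [Set.Finite.mem_toFinset, Set.mem_setOf_eq] at hb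
    exact Set.indicator_of_notMem hb _)]
  rw [Finset.sum_congr rfl (fun b hb => by
    simp only [Set.Finite.mem_toFinset, Set.mem_setOf_eq] at hb
    exact Set.indicator_of_mem hb _)]
  simp


lemma config_nat {γ : Measure X} (hγ : IsConfiguration γ) {S : Set X} (hS : MeasurableSet S)
    (h : γ S ≠ ⊤) : ∃ j : ℕ, γ S = j := by
  obtain ⟨ι, hι, f, rfl⟩ := hγ
  exact ⟨_, config_sum_eq f hS (config_finite f hS h)⟩


end Config

section Urysohn
variable {n : ℕ}

lemma exists_urysohn {S U : Set (EucSp n)} (hS : IsClosed S) (hU : IsOpen U)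
    (hUb : Bornology.IsBounded U) (hSU : S ⊆ U) :
    ∃ g : EucSp n → ℝ, Continuous g ∧ HasCompactSupport g ∧
      (∀ x, g x ∈ Icc (0:ℝ) 1) ∧ (∀ x ∈ S, g x = 1) ∧ (∀ x ∉ U, g x = 0) := by
  obtain ⟨g, hg0, hg1, hg01⟩ := exists_continuous_zero_one_of_isClosed
    (isClosed_compl_iff.2 hU) hS (by
      rw [Set.disjoint_compl_left_iff_subset]; exact hSU)
  refine ⟨g, g.continuous, ?_, hg01, fun x hx => hg1 hx, fun x hx => hg0 hx⟩
  have hsupp : tsupport g ⊆ closure U := by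
    apply closure_mono
    intro x hx
    by_contra hxU
    exact hx (hg0 hxU)
  exact HasCompactSupport.of_support_subset_isCompact
    (isCompact_of_isClosed_isBounded isClosed_closure hUb.closure)
    ((subset_closure).trans hsupp)

lemma meas_le_integral {μ : Measure (EucSp n)} {g : EucSp n → ℝ} {S : Set (EucSp n)}
    (hSm : MeasurableSet S) (hint : Integrable g μ) (hg1 : ∀ x ∈ S, g x = 1)
    (hg0 : ∀ x, 0 ≤ g x) (hfin : μ S ≠ ⊤) :
    (μ S).toReal ≤ ∫ x, g x ∂μ := by
  have h1 : ∫ x, S.indicator (fun _ => (1:ℝ)) x ∂μ = (μ S).toReal := by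
    rw [MeasureTheory.integral_indicator_const _ hSm]; simp [Measure.real]
  rw [← h1]
  apply integral_mono _ hint
  · intro x
    by_cases hx : x ∈ S
    · rw [Set.indicator_of_mem hx]; exact (hg1 x hx).ge
    · rw [Set.indicator_of_notMem hx]; exact hg0 x
  · rw [integrable_indicator_iff hSm]
    refine integrableOn_const hfin

lemma integral_le_meas {μ : Measure (EucSp n)} {g : EucSp n → ℝ} {S : Set (EucSp n)}
    (hSm : MeasurableSet S) (hint : Integrable g μ) (hg1 : ∀ x, g x ≤ 1)
    (hg0 : ∀ x ∉ S, g x = 0) (hgnn : ∀ x, 0 ≤ g x) (hfin : μ S ≠ ⊤) :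
    ∫ x, g x ∂μ ≤ (μ S).toReal := by
  have h1 : ∫ x, S.indicator (fun _ => (1:ℝ)) x ∂μ = (μ S).toReal := by
    rw [MeasureTheory.integral_indicator_const _ hSm]; simp [Measure.real]
  rw [← h1]
  apply integral_mono hint _
  · intro x
    by_cases hx : x ∈ S
    · rw [Set.indicator_of_mem hx]; exact hg1 x
    · rw [Set.indicator_of_notMem hx, hg0 x hx]
  · rw [integrable_indicator_iff hSm]
    exact integrableOn_const hfin

lemma finiteOnCompacts_of_balls {μ : Measure (EucSp n)} (h : ∀ R : ℝ, μ (ball 0 R) ≠ ⊤) :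
    IsFiniteMeasureOnCompacts μ := by
  constructor
  intro K hK
  obtain ⟨R, hR⟩ := hK.isBounded.subset_ball 0
  exact lt_of_le_of_lt (measure_mono hR) (h R).lt_top

end Urysohn

section Restrict
variable {X : Type*} [MeasurableSpace X]

lemma restrict_biUnion_finset {ι : Type*} (μ : Measure X) (s : Finset ι) (g : ι → Set X)
    (hmeas : ∀ i ∈ s, MeasurableSet (g i))
    (hdisj : ∀ i ∈ s, ∀ j ∈ s, i ≠ j → Disjoint (g i) (g j)) :
    μ.restrict (⋃ i ∈ s, g i) = ∑ i ∈ s, μ.restrict (g i) := by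
  classical
  induction s using Finset.induction_on with
  | empty => simp
  | @insert a t ha ih =>
    have h1 : (⋃ i ∈ insert a t, g i) = g a ∪ ⋃ i ∈ t, g i := by
      simp [Set.biUnion_insert]
    rw [h1, Measure.restrict_union, Finset.sum_insert ha,
      ih (fun i hi => hmeas i (Finset.mem_insert_of_mem hi))
        (fun i hi j hj hij => hdisj i (Finset.mem_insert_of_mem hi) j (Finset.mem_insert_of_mem hj) hij)]
    · exact Set.disjoint_iUnion₂_right.2 fun i hi =>
        hdisj a (Finset.mem_insert_self a t) i (Finset.mem_insert_of_mem hi)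
          (fun h => ha (h ▸ hi))
    · exact MeasurableSet.biUnion t.countable_toSet
        (fun i hi => hmeas i (Finset.mem_insert_of_mem hi))

lemma measure_map_finset_sum {ι : Type*} {Y : Type*} [MeasurableSpace Y] (s : Finset ι)
    (μ : ι → Measure X) {F : X → Y} (hF : Measurable F) :
    Measure.map F (∑ i ∈ s, μ i) = ∑ i ∈ s, Measure.map F (μ i) := by
  classical
  induction s using Finset.induction_on with
  | empty => simp
  | @insert a t ha ih =>
    rw [Finset.sum_insert ha, Finset.sum_insert ha, Measure.map_add _ _ hF, ih]



lemma sq_rpow_half (x : ℝ≥0∞) : (x ^ (2:ℕ)) ^ (1/2 : ℝ) = x := by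
  rw [← ENNReal.rpow_natCast x 2, ← ENNReal.rpow_mul]
  norm_num

lemma rpow_half_sq (x : ℝ≥0∞) : (x ^ (1/2:ℝ)) ^ (2:ℕ) = x := by
  rw [← ENNReal.rpow_natCast _ 2, ← ENNReal.rpow_mul]
  norm_num

lemma dPartial_le_of_coupling (n : ℕ) (r : ℝ) {γ η α β : Measure (EucSp n)}
    (hα : α (sphere (0 : EucSp n) r)ᶜ = 0) (hβ : β (sphere (0 : EucSp n) r)ᶜ = 0)
    {q : Measure (EucSp n × EucSp n)}
    (hq : q ∈ Cpl (γ.restrict (ball (0 : EucSp n) r) + α) (η.restrict (ball (0 : EucSp n) r) + β)) :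
    dPartial n r γ η ≤ (∫⁻ p, edist p.1 p.2 ^ 2 ∂q) ^ (1/2 : ℝ) := by
  have h1 : matchDist (γ.restrict (ball (0 : EucSp n) r) + α)
      (η.restrict (ball (0 : EucSp n) r) + β) ≤ (∫⁻ p, edist p.1 p.2 ^ 2 ∂q) ^ (1/2 : ℝ) := by
    apply ENNReal.rpow_le_rpow _ (by norm_num : (0:ℝ) ≤ 1/2)
    exact iInf₂_le q hq
  exact le_trans (iInf₂_le_of_le α hα (iInf₂_le_of_le β hβ le_rfl)) h1

lemma exists_coupling_of_dPartial_lt {n : ℕ} {r : ℝ} {γ η : Measure (EucSp n)} {δ : ℝ≥0∞}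
    (h : dPartial n r γ η < δ) :
    ∃ α : Measure (EucSp n), α (sphere (0 : EucSp n) r)ᶜ = 0 ∧
    ∃ β : Measure (EucSp n), β (sphere (0 : EucSp n) r)ᶜ = 0 ∧
    ∃ q ∈ Cpl (γ.restrict (ball (0 : EucSp n) r) + α) (η.restrict (ball (0 : EucSp n) r) + β),
      (∫⁻ p, edist p.1 p.2 ^ 2 ∂q) < δ ^ (2:ℕ) := by
  rw [dPartial, iInf_lt_iff] at h
  obtain ⟨α, h⟩ := h
  rw [iInf_lt_iff] at h
  obtain ⟨hα, h⟩ := h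
  rw [iInf_lt_iff] at h
  obtain ⟨β, h⟩ := h
  rw [iInf_lt_iff] at h
  obtain ⟨hβ, h⟩ := h
  refine ⟨α, hα, β, hβ, ?_⟩
  rw [matchDist] at h
  have h2 : (⨅ q ∈ Cpl (γ.restrict (ball (0 : EucSp n) r) + α)
      (η.restrict (ball (0 : EucSp n) r) + β), ∫⁻ p, edist p.1 p.2 ^ 2 ∂q) < δ ^ (2:ℕ) := by
    calc (⨅ q ∈ Cpl _ _, ∫⁻ p, edist p.1 p.2 ^ 2 ∂q)
        = ((⨅ q ∈ Cpl _ _, ∫⁻ p, edist p.1 p.2 ^ 2 ∂q) ^ (1/2:ℝ)) ^ (2:ℕ) := (rpow_half_sq _).symm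
      _ < δ ^ (2:ℕ) := by
          exact ENNReal.pow_lt_pow_left (by norm_num) h
  rw [iInf_lt_iff] at h2
  obtain ⟨q, h2⟩ := h2
  rw [iInf_lt_iff] at h2
  obtain ⟨hq, h2⟩ := h2
  exact ⟨q, hq, h2⟩


lemma finset_dist_gap {X : Type*} [MetricSpace X] (a : X) (t : Finset X) :
    ∃ d : ℝ, 0 < d ∧ ∀ z ∈ t, z ≠ a → d ≤ dist a z := by
  classical
  induction t using Finset.induction_on with
  | empty => exact ⟨1, one_pos, by simp⟩
  | @insert b s hb ih =>
    obtain ⟨d, hd, h⟩ := ih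
    by_cases hba : b = a
    · refine ⟨d, hd, fun z hz hza => ?_⟩
      rcases Finset.mem_insert.1 hz with rfl | hz'
      · exact absurd hba hza
      · exact h z hz' hza
    · refine ⟨min d (dist a b), lt_min hd (dist_pos.2 (fun h' => hba h'.symm)), fun z hz hza => ?_⟩
      rcases Finset.mem_insert.1 hz with rfl | hz'
      · exact min_le_right _ _
      · exact le_trans (min_le_left _ _) (h z hz' hza)

lemma finset_gap {X : Type*} [MetricSpace X] (Y : Finset X) :
    ∃ g0 : ℝ, 0 < g0 ∧ ∀ y ∈ Y, ∀ z ∈ Y, y ≠ z → g0 ≤ dist y z := by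
  classical
  induction Y using Finset.induction_on with
  | empty => exact ⟨1, one_pos, by simp⟩
  | @insert a t ha ih =>
    obtain ⟨g0, hg0, hgap⟩ := ih
    obtain ⟨d, hd, hda⟩ := finset_dist_gap a t
    refine ⟨min g0 d, lt_min hg0 hd, fun y hy z hz hyz => ?_⟩
    rcases Finset.mem_insert.1 hy with rfl | hy' <;> rcases Finset.mem_insert.1 hz with rfl | hz'
    · exact absurd rfl hyz
    · exact le_trans (min_le_right _ _) (hda z hz' (fun h => hyz h.symm))
    · rw [dist_comm]
      exact le_trans (min_le_right _ _) (hda y hy' hyz)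
    · exact le_trans (min_le_left _ _) (hgap y hy' z hz' hyz)

lemma forward_dir (n : ℕ) (γ : ℕ → Measure (EucSp n)) (γlim : Measure (EucSp n))
    (hγ : ∀ m, IsConfiguration (γ m)) (hγlim : IsConfiguration γlim)
    (hγf : ∀ m, ∀ R : ℝ, γ m (ball (0 : EucSp n) R) ≠ ⊤)
    (hγlimf : ∀ R : ℝ, γlim (ball (0 : EucSp n) R) ≠ ⊤)
    (hvague : ∀ f : EucSp n → ℝ, Continuous f → HasCompactSupport f →
        Tendsto (fun m => ∫ x, f x ∂(γ m)) atTop (𝓝 (∫ x, f x ∂γlim)))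
    {r : ℝ} (hr : 0 < r) :
    Tendsto (fun m => dPartial n r (γ m) γlim) atTop (𝓝 0) := by
  classical
  obtain ⟨ι, hι, f, hfeq⟩ := hγlim
  have hγlim' : IsConfiguration γlim := ⟨ι, hι, f, hfeq⟩
  -- finite set of atoms in the closed ball of radius r+2
  have hcbfin : γlim (closedBall (0 : EucSp n) (r+2)) ≠ ⊤ := by
    intro h
    exact hγlimf (r+3) (top_le_iff.1 (h ▸ measure_mono (closedBall_subset_ball (by linarith))))
  have hfinset : {i | f i ∈ closedBall (0 : EucSp n) (r+2)}.Finite := by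
    apply config_finite f measurableSet_closedBall
    rw [← hfeq]; exact hcbfin
  set Y : Finset (EucSp n) := hfinset.toFinset.image f with hYdef
  have hatom : ∀ S : Set (EucSp n), MeasurableSet S → S ⊆ closedBall (0 : EucSp n) (r+2) →
      (∀ y ∈ Y, y ∉ S) → γlim S = 0 := by
    intro S hSm hScb hSY
    rw [hfeq, config_apply f hSm]
    rw [ENNReal.tsum_eq_zero]
    intro i
    by_cases hi : f i ∈ S
    · exact absurd hi (hSY (f i) (by
        rw [hYdef]
        exact Finset.mem_image_of_mem f (hfinset.mem_toFinset.2 (hScb hi))))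
    · exact Set.indicator_of_notMem hi _
  obtain ⟨g0, hg0, hgap⟩ := finset_gap Y
  set A : ℝ≥0∞ := γlim (ball (0 : EucSp n) (r+2)) + 1 with hAdef
  have hAne : A ≠ ⊤ := by
    rw [hAdef]
    exact ENNReal.add_ne_top.2 ⟨hγlimf (r+2), one_ne_top⟩
  have key : ∀ ε : ℝ, 0 < ε → ε ≤ 1 → 4*ε < r → 4*ε ≤ g0 →
      ∀ᶠ m in atTop, dPartial n r (γ m) γlim ≤
        (ENNReal.ofReal (9*ε^2) * (3 * A)) ^ (1/2 : ℝ) := by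
    intro ε hεpos hε1 hεr hεg
    have hrε : (0:ℝ) < r - 3*ε := by linarith
    have hintm : ∀ (m : ℕ) (g : EucSp n → ℝ), Continuous g → HasCompactSupport g →
        Integrable g (γ m) := fun m g hc hcs => by
      haveI := finiteOnCompacts_of_balls (hγf m)
      exact hc.integrable_of_hasCompactSupport hcs
    have hintlim : ∀ (g : EucSp n → ℝ), Continuous g → HasCompactSupport g →
        Integrable g γlim := fun g hc hcs => by
      haveI := finiteOnCompacts_of_balls hγlimf
      exact hc.integrable_of_hasCompactSupport hcs
    have hfinm : ∀ m, γ m (closedBall (0:EucSp n) r) ≠ ⊤ := by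
      intro m h
      exact (hγf m (r+1)) (top_le_iff.1 (h ▸ measure_mono (closedBall_subset_ball (by linarith))))
    set Yin := Y.filter (fun y => ‖y‖ ≤ r - 2*ε) with hYindef
    have hYin : ∀ y ∈ Yin, y ∈ Y ∧ ‖y‖ ≤ r - 2*ε := fun y hy => Finset.mem_filter.1 hy
    set UB : Set (EucSp n) := ⋃ y ∈ Yin, ball y ε with hUBdef
    set D : Set (EucSp n) := ball (0:EucSp n) r \ UB with hDdef
    set K : Set (EucSp n) := closedBall (0:EucSp n) r \ ⋃ y ∈ Y, ball y ε with hKdef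
    set E : Set (EucSp n) := {x | r - 3*ε < ‖x‖ ∧ ‖x‖ < r} with hEdef
    have hUBmeas : MeasurableSet UB := (isOpen_biUnion (fun y _ => isOpen_ball)).measurableSet
    have hDmeas : MeasurableSet D := measurableSet_ball.diff hUBmeas
    have hKmeas : MeasurableSet K := measurableSet_closedBall.diff
      ((isOpen_biUnion (fun y _ => isOpen_ball)).measurableSet)
    have hEmeas : MeasurableSet E := by
      have hE : E = (fun x : EucSp n => ‖x‖) ⁻¹' (Ioo (r-3*ε) r) := rfl
      rw [hE]
      exact measurable_norm measurableSet_Ioo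
    have hball_sub : ∀ y ∈ Yin, ball y ε ⊆ ball (0:EucSp n) r := by
      intro y hy z hz
      rw [mem_ball] at hz ⊢
      have h1 : ‖y‖ ≤ r - 2*ε := (hYin y hy).2
      calc dist z 0 ≤ dist z y + dist y 0 := dist_triangle _ _ _
        _ < ε + (r - 2*ε) := by
            rw [dist_zero_right]
            exact add_lt_add_of_lt_of_le hz h1
        _ < r := by linarith
    have hdisj : ∀ y ∈ Yin, ∀ z ∈ Yin, y ≠ z → Disjoint (ball y ε) (ball z ε) := by
      intro y hy z hz hyz
      apply ball_disjoint_ball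
      have := hgap y (hYin y hy).1 z (hYin z hz).1 hyz
      linarith
    have hUBsub : UB ⊆ ball (0:EucSp n) r := Set.iUnion₂_subset hball_sub
    have hDE_K : D \ E ⊆ K := by
      rintro x ⟨⟨hxball, hxUB⟩, hxE⟩
      refine ⟨ball_subset_closedBall hxball, ?_⟩
      intro hxU
      obtain ⟨y, hy, hxy⟩ := Set.mem_iUnion₂.1 hxU
      by_cases hyin : y ∈ Yin
      · exact hxUB (Set.mem_biUnion hyin hxy)
      · have h1 : ¬ ‖y‖ ≤ r - 2*ε := fun h => hyin (Finset.mem_filter.2 ⟨hy, h⟩)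
        push_neg at h1
        apply hxE
        have hxr : ‖x‖ < r := by
          rw [mem_ball, dist_zero_right] at hxball
          exact hxball
        have h2 : ‖y‖ - ‖x‖ ≤ dist y x := by
          rw [dist_eq_norm]
          exact norm_sub_norm_le y x
        rw [mem_ball] at hxy
        rw [dist_comm] at h2
        exact ⟨by linarith, hxr⟩
    have hγlimK : γlim K = 0 := by
      apply hatom K hKmeas
      · intro x hx
        exact closedBall_subset_closedBall (by linarith) hx.1
      · intro y hy hyK
        exact hyK.2 (Set.mem_biUnion hy (mem_ball_self hεpos))
    have hγlimDE : γlim (D \ E) = 0 := measure_mono_null hDE_K hγlimK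
    -- Fact 1 : uniform mass bound
    have hF1 : ∀ᶠ m in atTop, γ m (closedBall (0:EucSp n) r) ≤ A := by
      obtain ⟨g, hgc, hgcs, hg01, hg1, hg0⟩ := exists_urysohn
        (isClosed_closedBall : IsClosed (closedBall (0:EucSp n) r)) isOpen_ball isBounded_ball
        (closedBall_subset_ball (by linarith : r < r+1))
      have hgl : ∫ x, g x ∂γlim ≤ (γlim (ball (0:EucSp n) (r+2))).toReal :=
        integral_le_meas measurableSet_ball (hintlim g hgc hgcs)
          (fun x => (hg01 x).2)
          (fun x hx => hg0 x (fun h => hx (ball_subset_ball (by linarith) h)))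
          (fun x => (hg01 x).1) (hγlimf (r+2))
      have hev := (hvague g hgc hgcs).eventually_lt_const
        (show ∫ x, g x ∂γlim < (γlim (ball (0:EucSp n) (r+2))).toReal + 1 by linarith)
      filter_upwards [hev] with m hm
      have h1 : (γ m (closedBall (0:EucSp n) r)).toReal ≤ ∫ x, g x ∂(γ m) :=
        meas_le_integral measurableSet_closedBall (hintm m g hgc hgcs) hg1
          (fun x => (hg01 x).1) (hfinm m)
      have h2 : (γ m (closedBall (0:EucSp n) r)).toReal ≤ A.toReal := by
        rw [hAdef, ENNReal.toReal_add (hγlimf (r+2)) one_ne_top, ENNReal.toReal_one]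
        linarith
      exact (ENNReal.toReal_le_toReal (hfinm m) hAne).1 h2
    -- Fact 2 : no stray mass
    have hF2 : ∀ᶠ m in atTop, γ m K = 0 := by
      have hKsub : K ⊆ ball (0:EucSp n) (r+1) \ ⋃ y ∈ Y, closedBall y (ε/2) := by
        rintro x ⟨hx1, hx2⟩
        refine ⟨closedBall_subset_ball (by linarith) hx1, ?_⟩
        intro hxU
        obtain ⟨y, hy, hxy⟩ := Set.mem_iUnion₂.1 hxU
        exact hx2 (Set.mem_biUnion hy (closedBall_subset_ball (by linarith) hxy))
      have hUopen : IsOpen (ball (0:EucSp n) (r+1) \ ⋃ y ∈ Y, closedBall y (ε/2)) :=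
        isOpen_ball.sdiff (isClosed_biUnion_finset (fun y _ => isClosed_closedBall))
      have hKclosed : IsClosed K := by
        rw [hKdef, Set.diff_eq]
        exact isClosed_closedBall.inter (isOpen_biUnion (fun y _ => isOpen_ball)).isClosed_compl
      have hUb : Bornology.IsBounded (ball (0:EucSp n) (r+1) \ ⋃ y ∈ Y, closedBall y (ε/2)) :=
        isBounded_ball.subset diff_subset
      obtain ⟨g, hgc, hgcs, hg01, hg1, hg0⟩ := exists_urysohn hKclosed hUopen hUb hKsub
      have hclU : γlim (closure (ball (0:EucSp n) (r+1) \ ⋃ y ∈ Y, closedBall y (ε/2))) = 0 := by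
        apply hatom _ isClosed_closure.measurableSet
        · intro x hx
          have hsub : closure (ball (0:EucSp n) (r+1) \ ⋃ y ∈ Y, closedBall y (ε/2)) ⊆
              closure (ball (0:EucSp n) (r+1)) := closure_mono diff_subset
          exact closedBall_subset_closedBall (by linarith)
            (closure_ball_subset_closedBall (hsub hx))
        · intro y hy hyc
          have hdisj2 : Disjoint (ball y (ε/2))
              (ball (0:EucSp n) (r+1) \ ⋃ y ∈ Y, closedBall y (ε/2)) := by
            rw [Set.disjoint_right]
            rintro z ⟨_, hz2⟩ hzball
            exact hz2 (Set.mem_biUnion hy (ball_subset_closedBall hzball))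
          obtain ⟨z, hz1, hz2⟩ := mem_closure_iff.1 hyc (ball y (ε/2)) isOpen_ball
            (mem_ball_self (by linarith))
          exact (Set.disjoint_left.1 hdisj2) hz1 hz2
      have hgl : ∫ x, g x ∂γlim ≤ 0 := by
        have h := integral_le_meas isClosed_closure.measurableSet (hintlim g hgc hgcs)
          (fun x => (hg01 x).2) (fun x hx => hg0 x (fun h => hx (subset_closure h)))
          (fun x => (hg01 x).1) (by rw [hclU]; exact zero_ne_top)
        rw [hclU] at h
        simpa using h
      have hev := (hvague g hgc hgcs).eventually_lt_const
        (show ∫ x, g x ∂γlim < 1/2 by linarith)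
      filter_upwards [hev] with m hm
      have hKfin : γ m K ≠ ⊤ := by
        intro h
        exact (hfinm m) (top_le_iff.1 (h ▸ measure_mono diff_subset))
      obtain ⟨j, hj⟩ := config_nat (hγ m) hKmeas hKfin
      have h1 : (γ m K).toReal ≤ ∫ x, g x ∂(γ m) :=
        meas_le_integral hKmeas (hintm m g hgc hgcs) hg1 (fun x => (hg01 x).1) hKfin
      have hjr : (j:ℝ) < 1/2 := by
        rw [hj, ENNReal.toReal_natCast] at h1
        linarith
      have hj0 : j = 0 := by
        have : (j:ℝ) < 1 := by linarith
        exact_mod_cast Nat.lt_one_iff.1 (by exact_mod_cast this)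
      rw [hj, hj0, Nat.cast_zero]
    -- Fact 3 : exact counts in inner balls
    have hF3 : ∀ᶠ m in atTop, ∀ y ∈ Yin, γ m (ball y ε) = γlim {y} := by
      rw [Filter.eventually_all_finset]
      intro y hy
      obtain ⟨hyY, hynorm⟩ := hYin y hy
      have hyball2 : ({y} : Set (EucSp n)) ⊆ ball (0:EucSp n) (r+2) := by
        intro z hz
        rw [Set.mem_singleton_iff] at hz
        subst hz
        rw [mem_ball, dist_zero_right]
        linarith
      have hyfin : γlim {y} ≠ ⊤ := fun h => hγlimf (r+2) (top_le_iff.1 (h ▸ measure_mono hyball2))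
      obtain ⟨ky, hky⟩ := config_nat hγlim' (measurableSet_singleton y) hyfin
      have hballsub2 : ball y ε ⊆ ball (0:EucSp n) (r+2) := by
        intro z hz
        rw [mem_ball] at hz ⊢
        calc dist z 0 ≤ dist z y + dist y 0 := dist_triangle _ _ _
          _ < ε + (r - 2*ε) := by
              rw [dist_zero_right]
              exact add_lt_add_of_lt_of_le hz hynorm
          _ < r + 2 := by linarith
      have hcb2 : γlim (closedBall y (2*ε)) = γlim {y} := by
        have hnull : γlim (closedBall y (2*ε) \ {y}) = 0 := by
          apply hatom _ (measurableSet_closedBall.diff (measurableSet_singleton y))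
          · rintro x ⟨hx1, _⟩
            rw [mem_closedBall] at hx1
            rw [mem_closedBall]
            calc dist x 0 ≤ dist x y + dist y 0 := dist_triangle _ _ _
              _ ≤ 2*ε + (r - 2*ε) := by
                  rw [dist_zero_right]
                  exact add_le_add hx1 hynorm
              _ ≤ r + 2 := by linarith
          · rintro z hz ⟨hz1, hz2⟩
            rw [Set.mem_singleton_iff] at hz2
            have hg := hgap z hz y hyY hz2
            rw [mem_closedBall] at hz1
            linarith
        apply le_antisymm
        · calc γlim (closedBall y (2*ε))
              ≤ γlim ({y} ∪ (closedBall y (2*ε) \ {y})) := measure_mono (by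
                intro x hx
                by_cases hxy : x = y
                · exact Or.inl hxy
                · exact Or.inr ⟨hx, hxy⟩)
            _ ≤ γlim {y} + γlim (closedBall y (2*ε) \ {y}) := measure_union_le _ _
            _ = γlim {y} := by rw [hnull, add_zero]
        · exact measure_mono (by
            intro x hx
            rw [Set.mem_singleton_iff] at hx
            subst hx
            exact mem_closedBall_self (by linarith))
      obtain ⟨g1, h1c, h1cs, h101, h11, h10⟩ := exists_urysohn
        (isClosed_closedBall : IsClosed (closedBall y (ε/2))) isOpen_ball isBounded_ball
        (closedBall_subset_ball (by linarith : ε/2 < ε))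
      obtain ⟨g2, h2c, h2cs, h201, h21, h20⟩ := exists_urysohn
        (isClosed_closedBall : IsClosed (closedBall y ε)) isOpen_ball isBounded_ball
        (closedBall_subset_ball (by linarith : ε < 2*ε))
      have hcbfin2 : γlim (closedBall y (2*ε)) ≠ ⊤ := by rw [hcb2]; exact hyfin
      have hcbhalffin : γlim (closedBall y (ε/2)) ≠ ⊤ := by
        intro h
        exact hcbfin2 (top_le_iff.1 (h ▸ measure_mono (closedBall_subset_closedBall (by linarith))))
      have hlow : (ky:ℝ) ≤ ∫ x, g1 x ∂γlim := by
        have ha : (γlim (closedBall y (ε/2))).toReal ≤ ∫ x, g1 x ∂γlim :=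
          meas_le_integral measurableSet_closedBall (hintlim g1 h1c h1cs) h11
            (fun x => (h101 x).1) hcbhalffin
        have hb : (ky:ℝ) ≤ (γlim (closedBall y (ε/2))).toReal := by
          have hmono : γlim {y} ≤ γlim (closedBall y (ε/2)) :=
            measure_mono (by
              intro x hx
              rw [Set.mem_singleton_iff] at hx
              subst hx
              exact mem_closedBall_self (by linarith))
          have := ENNReal.toReal_mono hcbhalffin hmono
          rw [hky, ENNReal.toReal_natCast] at this
          exact this
        linarith
      have hup : ∫ x, g2 x ∂γlim ≤ (ky:ℝ) := by
        have h := integral_le_meas (measurableSet_closedBall : MeasurableSet (closedBall y (2*ε)))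
          (hintlim g2 h2c h2cs) (fun x => (h201 x).2)
          (fun x hx => h20 x (fun hb => hx (ball_subset_closedBall hb)))
          (fun x => (h201 x).1) hcbfin2
        rw [hcb2, hky, ENNReal.toReal_natCast] at h
        exact h
      have hev1 := (hvague g1 h1c h1cs).eventually_const_lt
        (show (ky:ℝ) - 1/2 < ∫ x, g1 x ∂γlim by linarith)
      have hev2 := (hvague g2 h2c h2cs).eventually_lt_const
        (show ∫ x, g2 x ∂γlim < (ky:ℝ) + 1/2 by linarith)
      filter_upwards [hev1, hev2] with m hm1 hm2
      have hballfin : γ m (ball y ε) ≠ ⊤ := by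
        intro h
        exact hγf m (r+2) (top_le_iff.1 (h ▸ measure_mono hballsub2))
      obtain ⟨j, hj⟩ := config_nat (hγ m) measurableSet_ball hballfin
      have hlo : (ky:ℝ) - 1/2 < (j:ℝ) := by
        have h := integral_le_meas measurableSet_ball (hintm m g1 h1c h1cs)
          (fun x => (h101 x).2) (fun x hx => h10 x hx) (fun x => (h101 x).1) hballfin
        rw [hj, ENNReal.toReal_natCast] at h
        linarith
      have hhi : (j:ℝ) < (ky:ℝ) + 1/2 := by
        have h := meas_le_integral measurableSet_ball (hintm m g2 h2c h2cs)
          (fun x hx => h21 x (ball_subset_closedBall hx)) (fun x => (h201 x).1) hballfin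
        rw [hj, ENNReal.toReal_natCast] at h
        linarith
      have hjk : j = ky := by
        have l1 : j < ky + 1 := by exact_mod_cast show (j:ℝ) < (ky:ℝ) + 1 by push_cast; linarith
        have l2 : ky < j + 1 := by exact_mod_cast show (ky:ℝ) < (j:ℝ) + 1 by push_cast; linarith
        omega
      rw [hj, hky, hjk]
    -- main construction
    filter_upwards [hF1, hF2, hF3] with m hm1 hm2 hm3
    -- the radial projection
    set proj : EucSp n → EucSp n := fun x => (r / ‖x‖) • x with hprojdef
    have hprojm : Measurable proj := (measurable_const.div measurable_norm).smul measurable_id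
    have hprojE : ∀ x ∈ E, proj x ∈ sphere (0:EucSp n) r ∧ dist x (proj x) ≤ 3*ε := by
      rintro x ⟨hx1, hx2⟩
      have hx0 : 0 < ‖x‖ := by linarith
      have hnp : ‖proj x‖ = r := by
        rw [hprojdef]
        simp only
        rw [norm_smul, Real.norm_eq_abs, abs_of_pos (div_pos hr hx0)]
        field_simp
      constructor
      · rw [mem_sphere, dist_zero_right]
        exact hnp
      · have hsub : x - proj x = (1 - r/‖x‖) • x := by
          rw [hprojdef]
          simp only
          rw [sub_smul, one_smul]
        rw [dist_eq_norm, hsub, norm_smul, Real.norm_eq_abs]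
        have h1 : 1 - r/‖x‖ ≤ 0 := by
          rw [sub_nonpos, le_div_iff₀ hx0]
          linarith
        rw [abs_of_nonpos h1]
        have h2 : -(1 - r/‖x‖) * ‖x‖ = r - ‖x‖ := by
          rw [neg_sub, sub_mul, div_mul_cancel₀ _ hx0.ne', one_mul]
        rw [h2]
        linarith
    -- the coupling
    set μm := γ m with hμmdef
    set q1 : Measure (EucSp n × EucSp n) :=
      ∑ y ∈ Yin, (μm.restrict (ball y ε)).map (fun x => (x, y)) with hq1def
    set q2 : Measure (EucSp n × EucSp n) := (μm.restrict D).map (fun x => (x, proj x)) with hq2def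
    set q3 : Measure (EucSp n × EucSp n) := (γlim.restrict D).map (fun x => (proj x, x)) with hq3def
    set αm : Measure (EucSp n) := (γlim.restrict D).map proj with hαdef
    set βm : Measure (EucSp n) := (μm.restrict D).map proj with hβdef
    have hγmDE : μm (D \ E) = 0 := measure_mono_null hDE_K hm2
    have hsphere_meas : MeasurableSet (sphere (0:EucSp n) r)ᶜ :=
      isClosed_sphere.measurableSet.compl
    have hDEsub : ∀ (ν : Measure (EucSp n)), ν (D \ E) = 0 →
        (ν.restrict D).map proj (sphere (0:EucSp n) r)ᶜ = 0 := by
      intro ν hν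
      rw [Measure.map_apply hprojm hsphere_meas, Measure.restrict_apply (hprojm hsphere_meas)]
      apply measure_mono_null _ hν
      rintro x ⟨hx1, hx2⟩
      exact ⟨hx2, fun hxE => hx1 (hprojE x hxE).1⟩
    have hα0 : αm (sphere (0:EucSp n) r)ᶜ = 0 := hDEsub γlim hγlimDE
    have hβ0 : βm (sphere (0:EucSp n) r)ᶜ = 0 := hDEsub μm hγmDE
    -- partition of restricted measures
    have hpart : ∀ ν : Measure (EucSp n), ν.restrict (ball (0:EucSp n) r) =
        (∑ y ∈ Yin, ν.restrict (ball y ε)) + ν.restrict D := by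
      intro ν
      have hsplit : ball (0:EucSp n) r = UB ∪ D := (Set.union_diff_cancel hUBsub).symm
      rw [hsplit, Measure.restrict_union disjoint_sdiff_self_right hDmeas, hUBdef,
        restrict_biUnion_finset ν Yin _ (fun y _ => measurableSet_ball) hdisj]
    have hmapmeas1 : ∀ y : EucSp n, Measurable (fun x : EucSp n => (x, y)) :=
      fun y => measurable_id.prodMk measurable_const
    have hmapmeas2 : Measurable (fun x : EucSp n => (x, proj x)) :=
      measurable_id.prodMk hprojm
    have hmapmeas3 : Measurable (fun x : EucSp n => (proj x, x)) :=
      hprojm.prodMk measurable_id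
    have hfst : (q1 + q2 + q3).map Prod.fst = μm.restrict (ball (0:EucSp n) r) + αm := by
      rw [Measure.map_add _ _ measurable_fst, Measure.map_add _ _ measurable_fst]
      have e1 : q1.map Prod.fst = ∑ y ∈ Yin, μm.restrict (ball y ε) := by
        rw [hq1def, measure_map_finset_sum _ _ measurable_fst]
        apply Finset.sum_congr rfl
        intro y hy
        rw [Measure.map_map measurable_fst (hmapmeas1 y)]
        have hc : (Prod.fst ∘ fun x : EucSp n => (x, y)) = id := rfl
        rw [hc, Measure.map_id]
      have e2 : q2.map Prod.fst = μm.restrict D := by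
        rw [hq2def, Measure.map_map measurable_fst hmapmeas2]
        have hc : (Prod.fst ∘ fun x : EucSp n => (x, proj x)) = id := rfl
        rw [hc, Measure.map_id]
      have e3 : q3.map Prod.fst = αm := by
        rw [hq3def, hαdef, Measure.map_map measurable_fst hmapmeas3]
        rfl
      rw [e1, e2, e3, hpart μm]
    have hsingle : ∀ y ∈ Yin, γlim.restrict (ball y ε) = γlim {y} • Measure.dirac y := by
      intro y hy
      obtain ⟨hyY, hynorm⟩ := hYin y hy
      have hnull : γlim (ball y ε \ {y}) = 0 := by
        apply hatom _ (measurableSet_ball.diff (measurableSet_singleton y))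
        · rintro x ⟨hx1, _⟩
          rw [mem_ball] at hx1
          rw [mem_closedBall]
          calc dist x 0 ≤ dist x y + dist y 0 := dist_triangle _ _ _
            _ ≤ ε + (r - 2*ε) := by
                rw [dist_zero_right]
                exact add_le_add hx1.le hynorm
            _ ≤ r + 2 := by linarith
        · rintro z hz ⟨hz1, hz2⟩
          rw [Set.mem_singleton_iff] at hz2
          have hg := hgap z hz y hyY hz2
          rw [mem_ball] at hz1
          linarith
      have hae : ball y ε =ᵐ[γlim] ({y} : Set (EucSp n)) := by
        apply MeasureTheory.ae_eq_set.2
        refine ⟨hnull, ?_⟩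
        have he : ({y} : Set (EucSp n)) \ ball y ε = ∅ := by
          rw [Set.diff_eq_empty]
          intro z hz
          rw [Set.mem_singleton_iff] at hz
          subst hz
          exact mem_ball_self hεpos
        rw [he]
        exact measure_empty
      rw [Measure.restrict_congr_set hae, Measure.restrict_singleton]
    have hsnd : (q1 + q2 + q3).map Prod.snd = γlim.restrict (ball (0:EucSp n) r) + βm := by
      rw [Measure.map_add _ _ measurable_snd, Measure.map_add _ _ measurable_snd]
      have e1 : q1.map Prod.snd = ∑ y ∈ Yin, γlim.restrict (ball y ε) := by
        rw [hq1def, measure_map_finset_sum _ _ measurable_snd]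
        apply Finset.sum_congr rfl
        intro y hy
        rw [Measure.map_map measurable_snd (hmapmeas1 y)]
        have hc : (Prod.snd ∘ fun x : EucSp n => (x, y)) = fun _ => y := rfl
        rw [hc, Measure.map_const, Measure.restrict_apply_univ, hm3 y hy, hsingle y hy]
      have e2 : q2.map Prod.snd = βm := by
        rw [hq2def, hβdef, Measure.map_map measurable_snd hmapmeas2]
        rfl
      have e3 : q3.map Prod.snd = γlim.restrict D := by
        rw [hq3def, Measure.map_map measurable_snd hmapmeas3]
        have hc : (Prod.snd ∘ fun x : EucSp n => (proj x, x)) = id := rfl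
        rw [hc, Measure.map_id]
      rw [e1, e2, e3, hpart γlim]
      exact add_right_comm _ _ _
    -- cost estimate
    have hem : Measurable (fun p : EucSp n × EucSp n => edist p.1 p.2 ^ 2) :=
      measurable_edist.pow_const 2
    have hμmA : μm D ≤ A := le_trans (measure_mono (diff_subset.trans ball_subset_closedBall)) hm1
    have hγlimA : γlim D ≤ A := by
      refine le_trans (measure_mono ?_) (le_trans (le_of_eq rfl) (self_le_add_right _ 1))
      exact diff_subset.trans (ball_subset_ball (by linarith))
    have hcost : ∫⁻ p, edist p.1 p.2 ^ 2 ∂(q1 + q2 + q3) ≤ ENNReal.ofReal (9*ε^2) * (3 * A) := by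
      rw [lintegral_add_measure, lintegral_add_measure]
      have hA9 : ENNReal.ofReal (ε^2) ≤ ENNReal.ofReal (9*ε^2) :=
        ENNReal.ofReal_le_ofReal (by nlinarith)
      have t1 : ∫⁻ p, edist p.1 p.2 ^2 ∂q1 ≤ ENNReal.ofReal (9*ε^2) * A := by
        rw [hq1def, lintegral_finset_sum_measure]
        have hterm : ∀ y ∈ Yin,
            ∫⁻ p, edist p.1 p.2 ^2 ∂((μm.restrict (ball y ε)).map (fun x => (x,y)))
            ≤ ENNReal.ofReal (ε^2) * μm (ball y ε) := by
          intro y hy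
          rw [lintegral_map hem (hmapmeas1 y)]
          calc ∫⁻ x, edist x y ^ 2 ∂(μm.restrict (ball y ε))
              ≤ ∫⁻ _, ENNReal.ofReal (ε^2) ∂(μm.restrict (ball y ε)) := by
                apply lintegral_mono_ae
                rw [ae_restrict_iff' measurableSet_ball]
                apply ae_of_all
                intro x hx
                rw [mem_ball] at hx
                rw [edist_dist, ← ENNReal.ofReal_pow dist_nonneg]
                exact ENNReal.ofReal_le_ofReal
                  (by nlinarith [dist_nonneg (x := x) (y := y)])
            _ = ENNReal.ofReal (ε^2) * μm (ball y ε) := by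
                rw [lintegral_const, Measure.restrict_apply_univ]
        calc ∑ y ∈ Yin, ∫⁻ p, edist p.1 p.2 ^2 ∂((μm.restrict (ball y ε)).map (fun x => (x,y)))
            ≤ ∑ y ∈ Yin, ENNReal.ofReal (ε^2) * μm (ball y ε) := Finset.sum_le_sum hterm
          _ = ENNReal.ofReal (ε^2) * ∑ y ∈ Yin, μm (ball y ε) := by rw [Finset.mul_sum]
          _ = ENNReal.ofReal (ε^2) * μm UB := by
              rw [hUBdef, measure_biUnion_finset
                (fun y hy z hz hyz => hdisj y hy z hz hyz)
                (fun y _ => measurableSet_ball)]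
          _ ≤ ENNReal.ofReal (9*ε^2) * A := by
              exact mul_le_mul' hA9
                (le_trans (measure_mono (hUBsub.trans ball_subset_closedBall)) hm1)
      have hDbound : ∀ (ν : Measure (EucSp n)), ν (D \ E) = 0 →
          ∀ (F : EucSp n → EucSp n × EucSp n), Measurable F →
          (∀ x ∈ E, edist (F x).1 (F x).2 ^ 2 ≤ ENNReal.ofReal (9*ε^2)) →
          ∫⁻ p, edist p.1 p.2 ^2 ∂((ν.restrict D).map F) ≤ ENNReal.ofReal (9*ε^2) * ν D := by
        intro ν hν F hF hFb
        rw [lintegral_map hem hF]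
        calc ∫⁻ x, edist (F x).1 (F x).2 ^ 2 ∂(ν.restrict D)
            ≤ ∫⁻ _, ENNReal.ofReal (9*ε^2) ∂(ν.restrict D) := by
              apply lintegral_mono_ae
              have hae : ∀ᵐ x ∂(ν.restrict D), x ∈ E := by
                rw [ae_iff]
                have hset : {a : EucSp n | ¬ a ∈ E} = Eᶜ := rfl
                rw [hset, Measure.restrict_apply hEmeas.compl]
                have hsub2 : Eᶜ ∩ D ⊆ D \ E := fun x hx => ⟨hx.2, hx.1⟩
                exact measure_mono_null hsub2 hν
              filter_upwards [hae] with x hx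
              exact hFb x hx
          _ = ENNReal.ofReal (9*ε^2) * ν D := by
              rw [lintegral_const, Measure.restrict_apply_univ]
      have t2 : ∫⁻ p, edist p.1 p.2 ^2 ∂q2 ≤ ENNReal.ofReal (9*ε^2) * A := by
        rw [hq2def]
        refine le_trans (hDbound μm hγmDE _ hmapmeas2 ?_) (mul_le_mul' le_rfl hμmA)
        intro x hx
        rw [edist_dist, ← ENNReal.ofReal_pow dist_nonneg]
        have hd := (hprojE x hx).2
        exact ENNReal.ofReal_le_ofReal (by nlinarith [dist_nonneg (x := x) (y := proj x)])
      have t3 : ∫⁻ p, edist p.1 p.2 ^2 ∂q3 ≤ ENNReal.ofReal (9*ε^2) * A := by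
        rw [hq3def]
        refine le_trans (hDbound γlim hγlimDE _ hmapmeas3 ?_) (mul_le_mul' le_rfl hγlimA)
        intro x hx
        have hd := (hprojE x hx).2
        rw [edist_comm] -- edist of (proj x, x): edist (proj x) x
        rw [edist_dist, ← ENNReal.ofReal_pow dist_nonneg]
        exact ENNReal.ofReal_le_ofReal (by nlinarith [dist_nonneg (x := x) (y := proj x)])
      calc ∫⁻ p, edist p.1 p.2 ^2 ∂q1 + ∫⁻ p, edist p.1 p.2 ^2 ∂q2 + ∫⁻ p, edist p.1 p.2 ^2 ∂q3
          ≤ ENNReal.ofReal (9*ε^2) * A + ENNReal.ofReal (9*ε^2) * A + ENNReal.ofReal (9*ε^2) * A :=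
            add_le_add (add_le_add t1 t2) t3
        _ = ENNReal.ofReal (9*ε^2) * (3 * A) := by ring
    have hq : (q1 + q2 + q3) ∈ Cpl (μm.restrict (ball (0:EucSp n) r) + αm)
        (γlim.restrict (ball (0:EucSp n) r) + βm) := ⟨hfst, hsnd⟩
    calc dPartial n r (γ m) γlim
        ≤ (∫⁻ p, edist p.1 p.2 ^2 ∂(q1+q2+q3)) ^ (1/2:ℝ) :=
          dPartial_le_of_coupling n r hα0 hβ0 hq
      _ ≤ (ENNReal.ofReal (9*ε^2) * (3*A)) ^ (1/2:ℝ) := ENNReal.rpow_le_rpow hcost (by norm_num)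


  -- conclude
  rw [ENNReal.tendsto_atTop_zero]
  intro c hc
  have h3Ane : 3 * A ≠ ⊤ := ENNReal.mul_ne_top (by norm_num) hAne
  set c' := min c 1 with hc'def
  have hc'pos : 0 < c' := lt_min hc one_pos
  have hc'ne : c' ≠ ⊤ := ne_top_of_le_ne_top one_ne_top (min_le_right _ _)
  have hc'2ne : c' ^ (2:ℕ) ≠ ⊤ := ENNReal.pow_ne_top hc'ne
  have hc'2pos : 0 < (c' ^ (2:ℕ)).toReal := ENNReal.toReal_pos (pow_ne_zero _ hc'pos.ne') hc'2ne
  set B : ℝ := (3 * A).toReal + 1 with hBdef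
  have hBpos : 0 < B := by positivity
  set εt := Real.sqrt ((c' ^ (2:ℕ)).toReal / (9 * B)) with hεtdef
  have hεtpos : 0 < εt := Real.sqrt_pos.2 (by positivity)
  set ε := min (min εt 1) (min (r/8) (g0/4)) with hεdef
  have hεpos : 0 < ε := lt_min (lt_min hεtpos one_pos) (lt_min (by linarith) (by linarith))
  have hε1 : ε ≤ 1 := le_trans (min_le_left _ _) (min_le_right _ _)
  have hεr : 4*ε < r := by
    have : ε ≤ r/8 := le_trans (min_le_right _ _) (min_le_left _ _)
    linarith
  have hεg : 4*ε ≤ g0 := by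
    have : ε ≤ g0/4 := le_trans (min_le_right _ _) (min_le_right _ _)
    linarith
  have evt := key ε hεpos hε1 hεr hεg
  have hb : ENNReal.ofReal (9*ε^2) * (3*A) ≤ c' ^ (2:ℕ) := by
    have hεεt : ε ≤ εt := le_trans (min_le_left _ _) (min_le_left _ _)
    have hεt2 : εt^2 = (c' ^ (2:ℕ)).toReal / (9*B) := Real.sq_sqrt (by positivity)
    have hε2 : 9 * ε^2 ≤ (c' ^ (2:ℕ)).toReal / B := by
      have h1 : ε^2 ≤ εt^2 := pow_le_pow_left₀ hεpos.le hεεt 2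
      have h2 : 9 * ((c' ^ (2:ℕ)).toReal / (9*B)) = (c' ^ (2:ℕ)).toReal / B := by
        field_simp
      rw [hεt2] at h1
      linarith
    calc ENNReal.ofReal (9*ε^2) * (3*A)
        ≤ ENNReal.ofReal ((c' ^ (2:ℕ)).toReal / B) * ENNReal.ofReal B := by
          apply mul_le_mul' (ENNReal.ofReal_le_ofReal hε2)
          rw [← ENNReal.ofReal_toReal h3Ane]
          exact ENNReal.ofReal_le_ofReal (by rw [hBdef]; linarith)
      _ = ENNReal.ofReal ((c' ^ (2:ℕ)).toReal / B * B) := by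
          rw [← ENNReal.ofReal_mul (by positivity)]
      _ = ENNReal.ofReal ((c' ^ (2:ℕ)).toReal) := by
          rw [div_mul_cancel₀ _ hBpos.ne']
      _ ≤ c' ^ (2:ℕ) := ENNReal.ofReal_toReal_le
  have hfinal : (ENNReal.ofReal (9*ε^2) * (3*A)) ^ (1/2:ℝ) ≤ c := by
    calc (ENNReal.ofReal (9*ε^2) * (3*A)) ^ (1/2:ℝ)
        ≤ (c' ^ (2:ℕ)) ^ (1/2:ℝ) := ENNReal.rpow_le_rpow hb (by norm_num)
      _ = c' := sq_rpow_half c'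
      _ ≤ c := min_le_left _ _
  obtain ⟨N, hN⟩ := eventually_atTop.1 evt
  exact ⟨N, fun m hm => le_trans (hN m hm) hfinal⟩

set_option maxHeartbeats 1000000 in
lemma backward_dir (n : ℕ) (γ : ℕ → Measure (EucSp n)) (γlim : Measure (EucSp n))
    (hγf : ∀ m, ∀ R : ℝ, γ m (ball (0 : EucSp n) R) ≠ ⊤)
    (hγlimf : ∀ R : ℝ, γlim (ball (0 : EucSp n) R) ≠ ⊤)
    (hd : ∀ r : ℝ, 0 < r → Tendsto (fun m => dPartial n r (γ m) γlim) atTop (𝓝 0))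
    (f : EucSp n → ℝ) (hfc : Continuous f) (hfcs : HasCompactSupport f) :
    Tendsto (fun m => ∫ x, f x ∂(γ m)) atTop (𝓝 (∫ x, f x ∂γlim)) := by
  classical
  obtain ⟨ρ0, hρ0⟩ := hfcs.isBounded.subset_ball 0
  set ρ : ℝ := max ρ0 1 with hρdef
  have hρ1 : (1:ℝ) ≤ ρ := le_max_right _ _
  have hsupp : tsupport f ⊆ ball (0 : EucSp n) ρ :=
    hρ0.trans (ball_subset_ball (le_max_left _ _))
  set r : ℝ := ρ + 2 with hrdef
  have hr : 0 < r := by linarith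
  obtain ⟨Mf, hMf⟩ := hfc.bounded_above_of_compact_support hfcs
  have hMf0 : 0 ≤ Mf := le_trans (norm_nonneg _) (hMf 0)
  have huc := hfcs.uniformContinuous_of_continuous hfc
  rw [Metric.tendsto_atTop]
  intro e he
  set Mlim : ℝ := (γlim (ball (0:EucSp n) r)).toReal with hMlimdef
  have hMlim0 : 0 ≤ Mlim := ENNReal.toReal_nonneg
  set ε' : ℝ := e / (2*(Mlim+5)) with hε'def
  have hε'pos : 0 < ε' := by positivity
  obtain ⟨δ₀', hδ₀'pos, hδ₀'⟩ := Metric.uniformContinuous_iff.1 huc ε' hε'pos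
  set δ₀ : ℝ := min δ₀' 1 with hδ₀def
  have hδ₀pos : 0 < δ₀ := lt_min hδ₀'pos one_pos
  have hδ₀1 : δ₀ ≤ 1 := min_le_right _ _
  set δr : ℝ := min (δ₀ * Real.sqrt (e/(8*Mf+1))) 1 with hδrdef
  have hδrpos : 0 < δr := lt_min (by positivity) one_pos
  have hδr1 : δr ≤ 1 := min_le_right _ _
  -- eventually small dPartial
  have hev : ∀ᶠ m in atTop, dPartial n r (γ m) γlim < ENNReal.ofReal δr := by
    obtain ⟨N, hN⟩ := ENNReal.tendsto_atTop_zero.1 (hd r hr) (ENNReal.ofReal δr / 2)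
      (by
        apply ENNReal.div_pos
        · simp [ENNReal.ofReal_eq_zero]; linarith
        · exact ofNat_ne_top)
    rw [eventually_atTop]
    refine ⟨N, fun m hm => lt_of_le_of_lt (hN m hm) ?_⟩
    exact ENNReal.half_lt_self (by simp [ENNReal.ofReal_eq_zero]; linarith) ofReal_ne_top
  rw [eventually_atTop] at hev
  obtain ⟨N, hN⟩ := hev
  refine ⟨N, fun m hm => ?_⟩
  obtain ⟨α, hα, β, hβ, q, hq, hcost⟩ := exists_coupling_of_dPartial_lt (hN m hm)
  -- notation
  set μ : Measure (EucSp n) := (γ m).restrict (ball (0:EucSp n) r) + α with hμdef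
  set ν : Measure (EucSp n) := γlim.restrict (ball (0:EucSp n) r) + β with hνdef
  have hqfst : q.map Prod.fst = μ := hq.1
  have hqsnd : q.map Prod.snd = ν := hq.2
  have hcost' : ∫⁻ p, edist p.1 p.2 ^ 2 ∂q ≤ ENNReal.ofReal (δr^2) := by
    rw [ENNReal.ofReal_pow hδrpos.le]
    exact hcost.le
  -- integrability and integral identities
  have hfint : ∀ (μ0 : Measure (EucSp n)), μ0 (ball (0:EucSp n) r) ≠ ⊤ →
      (Integrable f (μ0.restrict (ball (0:EucSp n) r)) ∧
       ∫ x, f x ∂(μ0.restrict (ball (0:EucSp n) r)) = ∫ x, f x ∂μ0) := by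
    intro μ0 h0
    haveI : IsFiniteMeasure (μ0.restrict (ball (0:EucSp n) r)) := by
      constructor
      rw [Measure.restrict_apply_univ]
      exact h0.lt_top
    constructor
    · exact hfc.integrable_of_hasCompactSupport hfcs
    · apply setIntegral_eq_integral_of_forall_compl_eq_zero
      intro x hx
      apply image_eq_zero_of_notMem_tsupport
      intro hxt
      exact hx (ball_subset_ball (by linarith) (hsupp hxt))
  have hsphf : ∀ (κ : Measure (EucSp n)), κ (sphere (0:EucSp n) r)ᶜ = 0 →
      (Integrable f κ ∧ ∫ x, f x ∂κ = 0) := by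
    intro κ hκ
    have hae : ∀ᵐ x ∂κ, f x = 0 := by
      rw [ae_iff]
      apply measure_mono_null _ hκ
      intro x hx
      simp only [Set.mem_setOf_eq] at hx
      have hxt : x ∈ tsupport f := subset_closure (by simpa using hx)
      have hxb := hsupp hxt
      rw [mem_ball, dist_zero_right] at hxb
      intro hxs
      rw [mem_sphere, dist_zero_right] at hxs
      rw [hxs] at hxb
      linarith
    constructor
    · exact (integrable_zero _ _ _).congr (hae.mono fun x h => h.symm)
    · exact integral_eq_zero_of_ae hae
  have hμint : Integrable f μ := by
    rw [hμdef]
    exact ((hfint (γ m) (hγf m r)).1).add_measure ((hsphf α hα).1)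
  have hνint : Integrable f ν := by
    rw [hνdef]
    exact ((hfint γlim (hγlimf r)).1).add_measure ((hsphf β hβ).1)
  have hμeq : ∫ x, f x ∂μ = ∫ x, f x ∂(γ m) := by
    rw [hμdef, integral_add_measure ((hfint (γ m) (hγf m r)).1) ((hsphf α hα).1),
      (hsphf α hα).2, add_zero, (hfint (γ m) (hγf m r)).2]
  have hνeq : ∫ x, f x ∂ν = ∫ x, f x ∂γlim := by
    rw [hνdef, integral_add_measure ((hfint γlim (hγlimf r)).1) ((hsphf β hβ).1),
      (hsphf β hβ).2, add_zero, (hfint γlim (hγlimf r)).2]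
  -- express as integral against the coupling
  have hmf : AEStronglyMeasurable f (q.map Prod.fst) := by
    rw [hqfst]
    exact hfc.aestronglyMeasurable
  have hms : AEStronglyMeasurable f (q.map Prod.snd) := by
    rw [hqsnd]
    exact hfc.aestronglyMeasurable
  have hint1 : Integrable (f ∘ Prod.fst) q :=
    (integrable_map_measure hmf measurable_fst.aemeasurable).1 (by rw [hqfst]; exact hμint)
  have hint2 : Integrable (f ∘ Prod.snd) q :=
    (integrable_map_measure hms measurable_snd.aemeasurable).1 (by rw [hqsnd]; exact hνint)
  have heq1 : ∫ x, f x ∂μ = ∫ p, f p.1 ∂q := by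
    have h := integral_map measurable_fst.aemeasurable hmf
    rw [hqfst] at h
    exact h
  have heq2 : ∫ x, f x ∂ν = ∫ p, f p.2 ∂q := by
    have h := integral_map measurable_snd.aemeasurable hms
    rw [hqsnd] at h
    exact h
  have hdiff : ∫ x, f x ∂(γ m) - ∫ x, f x ∂γlim = ∫ p, (f p.1 - f p.2) ∂q := by
    rw [← hμeq, ← hνeq, heq1, heq2]
    exact (integral_sub hint1 hint2).symm
  -- events
  set E1 : Set (EucSp n × EucSp n) := {p | ENNReal.ofReal δ₀ ≤ edist p.1 p.2} with hE1def
  set E2 : Set (EucSp n × EucSp n) :=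
    {p | edist p.1 p.2 < ENNReal.ofReal δ₀} ∩ (Prod.fst ⁻¹' ball (0:EucSp n) (ρ+1)) with hE2def
  have hE1meas : MeasurableSet E1 := measurableSet_le measurable_const measurable_edist
  have hE2meas : MeasurableSet E2 :=
    (measurableSet_lt measurable_edist measurable_const).inter
      (measurable_fst measurableSet_ball)
  -- pointwise bound
  have hpt : ∀ p : EucSp n × EucSp n, ENNReal.ofReal ‖f p.1 - f p.2‖ ≤
      E1.indicator (fun _ => ENNReal.ofReal (2*Mf)) p +
      E2.indicator (fun _ => ENNReal.ofReal ε') p := by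
    intro p
    rcases le_or_gt (ENNReal.ofReal δ₀) (edist p.1 p.2) with hcase | hcase
    · calc ENNReal.ofReal ‖f p.1 - f p.2‖ ≤ ENNReal.ofReal (2*Mf) := by
            apply ENNReal.ofReal_le_ofReal
            calc ‖f p.1 - f p.2‖ ≤ ‖f p.1‖ + ‖f p.2‖ := norm_sub_le _ _
              _ ≤ 2*Mf := by linarith [hMf p.1, hMf p.2]
        _ = E1.indicator (fun _ => ENNReal.ofReal (2*Mf)) p := by
            have hpE1 : p ∈ E1 := hcase
            rw [Set.indicator_of_mem hpE1]
        _ ≤ _ := le_self_add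
    · by_cases hz : f p.1 = 0 ∧ f p.2 = 0
      · rw [hz.1, hz.2, sub_zero, norm_zero, ENNReal.ofReal_zero]
        exact zero_le
      · have hdlt : dist p.1 p.2 < δ₀ := by
          rw [edist_dist] at hcase
          exact (ENNReal.ofReal_lt_ofReal_iff hδ₀pos).1 hcase
        have hp1 : p.1 ∈ ball (0:EucSp n) (ρ+1) := by
          rcases not_and_or.1 hz with h1 | h2
          · have hb := hsupp (subset_closure (by simpa using h1))
            exact ball_subset_ball (by linarith) hb
          · have hb := hsupp (subset_closure (by simpa using h2))
            rw [mem_ball] at hb ⊢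
            calc dist p.1 0 ≤ dist p.1 p.2 + dist p.2 0 := dist_triangle _ _ _
              _ < δ₀ + ρ := add_lt_add hdlt hb
              _ ≤ ρ + 1 := by linarith
        have hmem : p ∈ E2 := ⟨hcase, hp1⟩
        have hfd : ‖f p.1 - f p.2‖ ≤ ε' := by
          have hlt := hδ₀' (lt_of_lt_of_le hdlt (min_le_left _ _))
          rw [Real.dist_eq] at hlt
          rw [Real.norm_eq_abs]
          exact hlt.le
        calc ENNReal.ofReal ‖f p.1 - f p.2‖ ≤ ENNReal.ofReal ε' :=
            ENNReal.ofReal_le_ofReal hfd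
          _ = E2.indicator (fun _ => ENNReal.ofReal ε') p := by
            rw [Set.indicator_of_mem hmem]
          _ ≤ _ := le_add_self
  -- lintegral bound
  have hlint : ∫⁻ p, ENNReal.ofReal ‖f p.1 - f p.2‖ ∂q ≤
      ENNReal.ofReal (2*Mf) * q E1 + ENNReal.ofReal ε' * q E2 := by
    calc ∫⁻ p, ENNReal.ofReal ‖f p.1 - f p.2‖ ∂q
        ≤ ∫⁻ p, (E1.indicator (fun _ => ENNReal.ofReal (2*Mf)) p +
            E2.indicator (fun _ => ENNReal.ofReal ε') p) ∂q := lintegral_mono hpt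
      _ = _ := by
          rw [lintegral_add_left (measurable_const.indicator hE1meas),
            lintegral_indicator_const hE1meas, lintegral_indicator_const hE2meas]
  -- Chebyshev bound on E1
  have hqE1 : q E1 ≤ ENNReal.ofReal (δr^2 / δ₀^2) := by
    have hcheb := mul_meas_ge_le_lintegral₀
      ((measurable_edist.pow_const 2).aemeasurable : AEMeasurable (fun p : EucSp n × EucSp n => edist p.1 p.2 ^ 2) q)
      (ENNReal.ofReal δ₀ ^ 2)
    have hsub : E1 ⊆ {p : EucSp n × EucSp n | ENNReal.ofReal δ₀ ^ 2 ≤ edist p.1 p.2 ^ 2} := by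
      intro p hp
      have hp' : ENNReal.ofReal δ₀ ≤ edist p.1 p.2 := hp
      simp only [Set.mem_setOf_eq]
      gcongr
    have h1 : ENNReal.ofReal δ₀ ^ 2 * q E1 ≤ ENNReal.ofReal (δr^2) :=
      le_trans (mul_le_mul' le_rfl (measure_mono hsub)) (le_trans hcheb hcost')
    rw [← ENNReal.ofReal_pow hδ₀pos.le] at h1
    have hne0 : ENNReal.ofReal (δ₀^2) ≠ 0 := by
      simp only [ne_eq, ENNReal.ofReal_eq_zero, not_le]
      positivity
    rw [ENNReal.ofReal_div_of_pos (by positivity),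
      ENNReal.le_div_iff_mul_le (Or.inl hne0) (Or.inl ofReal_ne_top), mul_comm]
    exact h1
  -- tail bound
  have hqtail : q {p : EucSp n × EucSp n | 1 ≤ edist p.1 p.2} ≤ ENNReal.ofReal (δr^2) := by
    have hcheb := mul_meas_ge_le_lintegral₀
      ((measurable_edist.pow_const 2).aemeasurable : AEMeasurable (fun p : EucSp n × EucSp n => edist p.1 p.2 ^ 2) q)
      (1 : ℝ≥0∞)
    rw [one_mul] at hcheb
    refine le_trans (le_trans (measure_mono ?_) hcheb) hcost'
    intro p hp
    have hp' : (1:ℝ≥0∞) ≤ edist p.1 p.2 := hp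
    simp only [Set.mem_setOf_eq]
    calc (1:ℝ≥0∞) = 1^2 := (one_pow 2).symm
      _ ≤ edist p.1 p.2 ^ 2 := by gcongr
  -- second marginal mass
  have hνball : ν (ball (0:EucSp n) (ρ+2)) ≤ γlim (ball (0:EucSp n) r) := by
    have hβ00 : β (ball (0:EucSp n) (ρ+2)) = 0 := by
      apply measure_mono_null _ hβ
      intro x hx
      rw [mem_ball] at hx
      simp only [Set.mem_compl_iff, mem_sphere]
      intro h
      rw [hrdef] at h
      linarith
    rw [hνdef, Measure.add_apply, hβ00, add_zero, Measure.restrict_apply measurableSet_ball]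
    exact measure_mono Set.inter_subset_right
  have hqE2 : q E2 ≤ γlim (ball (0:EucSp n) r) + ENNReal.ofReal (δr^2) := by
    have hsub : E2 ⊆ (Prod.snd ⁻¹' ball (0:EucSp n) (ρ+2)) ∪
        {p : EucSp n × EucSp n | 1 ≤ edist p.1 p.2} := by
      rintro p ⟨hp1, hp2⟩
      rcases lt_or_ge (edist p.1 p.2) 1 with hlt | hge
      · left
        have hd1 : dist p.1 p.2 < 1 := by
          rw [edist_dist, ← ENNReal.ofReal_one] at hlt
          exact (ENNReal.ofReal_lt_ofReal_iff one_pos).1 hlt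
        rw [Set.mem_preimage, mem_ball]
        rw [Set.mem_preimage, mem_ball] at hp2
        calc dist p.2 0 ≤ dist p.2 p.1 + dist p.1 0 := dist_triangle _ _ _
          _ < 1 + (ρ+1) := add_lt_add (by rw [dist_comm]; exact hd1) hp2
          _ = ρ + 2 := by ring
      · right
        exact hge
    calc q E2 ≤ q ((Prod.snd ⁻¹' ball (0:EucSp n) (ρ+2)) ∪
          {p : EucSp n × EucSp n | 1 ≤ edist p.1 p.2}) := measure_mono hsub
      _ ≤ q (Prod.snd ⁻¹' ball (0:EucSp n) (ρ+2)) +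
          q {p : EucSp n × EucSp n | 1 ≤ edist p.1 p.2} := measure_union_le _ _
      _ ≤ γlim (ball (0:EucSp n) r) + ENNReal.ofReal (δr^2) := by
          apply add_le_add _ hqtail
          rw [← Measure.map_apply measurable_snd measurableSet_ball, hqsnd]
          exact hνball
  -- final real computation
  have hE1fin : q E1 ≠ ⊤ := ne_top_of_le_ne_top ofReal_ne_top hqE1
  have hE2fin : q E2 ≠ ⊤ :=
    ne_top_of_le_ne_top (ENNReal.add_ne_top.2 ⟨hγlimf r, ofReal_ne_top⟩) hqE2
  have hnorm := norm_integral_le_lintegral_norm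
    (μ := q) (fun p : EucSp n × EucSp n => f p.1 - f p.2)
  have hS : (∫⁻ p, ENNReal.ofReal ‖f p.1 - f p.2‖ ∂q).toReal ≤
      (2*Mf) * (q E1).toReal + ε' * (q E2).toReal := by
    have hfin1 : ENNReal.ofReal (2*Mf) * q E1 ≠ ⊤ := ENNReal.mul_ne_top ofReal_ne_top hE1fin
    have hfin2 : ENNReal.ofReal ε' * q E2 ≠ ⊤ := ENNReal.mul_ne_top ofReal_ne_top hE2fin
    refine le_trans (ENNReal.toReal_mono (ENNReal.add_ne_top.2 ⟨hfin1, hfin2⟩) hlint) ?_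
    rw [ENNReal.toReal_add hfin1 hfin2, ENNReal.toReal_mul, ENNReal.toReal_mul,
      ENNReal.toReal_ofReal (by positivity : (0:ℝ) ≤ 2*Mf),
      ENNReal.toReal_ofReal hε'pos.le]
  have hb1 : (q E1).toReal ≤ δr^2/δ₀^2 := by
    have h := ENNReal.toReal_mono ofReal_ne_top hqE1
    rwa [ENNReal.toReal_ofReal (by positivity)] at h
  have hb2 : (q E2).toReal ≤ Mlim + 1 := by
    have h := ENNReal.toReal_mono (ENNReal.add_ne_top.2 ⟨hγlimf r, ofReal_ne_top⟩) hqE2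
    rw [ENNReal.toReal_add (hγlimf r) ofReal_ne_top,
      ENNReal.toReal_ofReal (by positivity)] at h
    have hδr2 : δr^2 ≤ 1 := by nlinarith
    rw [← hMlimdef] at h
    linarith
  have hkey1 : (2*Mf) * (δr^2/δ₀^2) ≤ e/4 := by
    have hδrle : δr ≤ δ₀ * Real.sqrt (e/(8*Mf+1)) := min_le_left _ _
    have hsq : δr^2 ≤ δ₀^2 * (e/(8*Mf+1)) := by
      have h1 : δr^2 ≤ (δ₀ * Real.sqrt (e/(8*Mf+1)))^2 := by
        apply pow_le_pow_left₀ hδrpos.le hδrle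
      rw [mul_pow, Real.sq_sqrt (by positivity)] at h1
      exact h1
    have hq2 : δr^2/δ₀^2 ≤ e/(8*Mf+1) := by
      rw [div_le_iff₀ (by positivity)]
      calc δr^2 ≤ δ₀^2 * (e/(8*Mf+1)) := hsq
        _ = e/(8*Mf+1) * δ₀^2 := by ring
    calc (2*Mf)*(δr^2/δ₀^2) ≤ (2*Mf) * (e/(8*Mf+1)) :=
          mul_le_mul_of_nonneg_left hq2 (by positivity)
      _ ≤ e/4 := by
          have heq : (2*Mf) * (e/(8*Mf+1)) = 2*Mf*e/(8*Mf+1) := by ring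
          rw [heq, div_le_div_iff₀ (by positivity) (by norm_num)]
          have h8 : 0 ≤ Mf * e := by positivity
          nlinarith [he.le]
  have hkey2 : ε' * (Mlim+1) ≤ e/2 := by
    rw [hε'def, div_mul_eq_mul_div, div_le_div_iff₀ (by positivity) (by norm_num)]
    nlinarith
  show dist (∫ x, f x ∂(γ m)) (∫ x, f x ∂γlim) < e
  rw [Real.dist_eq, ← Real.norm_eq_abs, hdiff]
  calc ‖∫ p, (f p.1 - f p.2) ∂q‖
      ≤ (∫⁻ p, ENNReal.ofReal ‖f p.1 - f p.2‖ ∂q).toReal := hnorm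
    _ ≤ (2*Mf) * (q E1).toReal + ε' * (q E2).toReal := hS
    _ ≤ e/4 + e/2 := by
        apply add_le_add
        · exact le_trans (mul_le_mul_of_nonneg_left hb1 (by positivity)) hkey1
        · exact le_trans (mul_le_mul_of_nonneg_left hb2 hε'pos.le) hkey2
    _ < e := by linarith




/-- A sequence of configurations `γ m` converges to `γlim` in the vague
topology on `Υ(ℝⁿ)` (i.e. tested against compactly supported continuous functions)
if and only if `d_Υ^(r)(γ m, γlim) → 0` for every `r > 0`. -/
theorem vague_tendsto_iff_dPartial_tendsto_zero (n : ℕ)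
    (γ : ℕ → Measure (EucSp n)) (γlim : Measure (EucSp n))
    (hγ : ∀ m, IsConfiguration (γ m)) (hγlim : IsConfiguration γlim)
    (hγf : ∀ m, ∀ R : ℝ, γ m (ball (0 : EucSp n) R) ≠ ⊤)
    (hγlimf : ∀ R : ℝ, γlim (ball (0 : EucSp n) R) ≠ ⊤) :
    (∀ f : EucSp n → ℝ, Continuous f → HasCompactSupport f →
        Tendsto (fun m => ∫ x, f x ∂(γ m)) atTop (𝓝 (∫ x, f x ∂γlim)))
    ↔ (∀ r : ℝ, 0 < r →
        Tendsto (fun m => dPartial n r (γ m) γlim) atTop (𝓝 0)) := by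
  constructor
  · intro hvague r hr
    exact forward_dir n γ γlim hγ hγlim hγf hγlimf hvague hr
  · intro hd f hfc hfcs
    exact backward_dir n γ γlim hγf hγlimf hd f hfc hfcs
end Restrict
end
end
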